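/- arXiv:2103.16763 — 13 statements merged into one kernel-verified Lean document; each statement's English description precedes it below -/
import Mathlib

section
/- Let q > 2 be a prime power and let s, t be natural numbers with t ≥ 1 and gcd(s,t) = 1. If gcd(t, q−1) = 1, then the maximum of Z(f) over all f(x,y,z) = a + b·x + c·z + d·x^s·y^t·z with (a,b,c,d) ≠ (0,0,0,0) equals (q−1)^2; equivalently, the minimum distance of the toric code C_{T(s,t)} is (q−1)^3 − (q−1)^2. -/
/-- `Zf f` is the number of points `(x,y,z) ∈ (Fˣ)³` with `f (x,y,z) = 0`. -/
noncomputable def Zf {F : Type} [Field F] [Fintype F]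
    (f : Fˣ × Fˣ × Fˣ → F) : ℕ :=
  Nat.card {v : Fˣ × Fˣ × Fˣ // f v = 0}

/-- The polynomial `a + b·x + c·z + d·x^s·y^t·z` from `T(s,t)`,
evaluated at `(x,y,z) = (v.1, v.2.1, v.2.2) ∈ (Fˣ)³`. -/
def fT {F : Type} [Field F] (s t : ℕ) (a b c d : F)
    (v : Fˣ × Fˣ × Fˣ) : F :=
  a + b * (v.1 : F) + c * (v.2.2 : F) +
    d * (v.1 : F) ^ s * (v.2.1 : F) ^ t * (v.2.2 : F)

lemma card_prod_units {F : Type} [Field F] [Fintype F] :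
    Nat.card (Fˣ × Fˣ) = (Fintype.card F - 1) ^ 2 := by
  rw [Nat.card_prod, Nat.card_units, Nat.card_eq_fintype_card, sq]

lemma pow_t_inj {F : Type} [Field F] [Fintype F] {t : ℕ}
    (h : Nat.gcd t (Fintype.card F - 1) = 1) :
    Function.Injective (fun y : Fˣ => y ^ t) := by
  have hc : (Nat.card Fˣ).Coprime t := by
    rw [Nat.card_units, Nat.card_eq_fintype_card]
    exact (Nat.coprime_comm.mp h)
  exact (powCoprime hc).injective

/-- If `gcd(t, q−1) = 1`, the maximum of `Z(f)` over nonzero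
`f = a + b·x + c·z + d·x^s·y^t·z` equals `(q−1)²`; equivalently the minimum
distance of `C_{T(s,t)}` is `(q−1)³ − (q−1)²`. -/
theorem stmt0 (F : Type) [Field F] [Fintype F] (s t : ℕ)
    (hq : 2 < Fintype.card F) (ht : 1 ≤ t) (hst : Nat.gcd s t = 1)
    (h : Nat.gcd t (Fintype.card F - 1) = 1) :
    IsGreatest {n : ℕ | ∃ a b c d : F, (a, b, c, d) ≠ (0, 0, 0, 0) ∧
        n = Zf (fT s t a b c d)}
      ((Fintype.card F - 1) ^ 2) := by
  constructor
  · -- membership: take a = 1, b = -1, c = d = 0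
    refine ⟨1, -1, 0, 0, by simp, ?_⟩
    have e : {v : Fˣ × Fˣ × Fˣ // fT s t (1 : F) (-1) 0 0 v = 0} ≃ Fˣ × Fˣ :=
      { toFun := fun v => v.1.2
        invFun := fun p => ⟨(1, p), by simp [fT]⟩
        left_inv := by
          rintro ⟨⟨x, p⟩, hv⟩
          have hx : x = 1 := by
            simp only [fT, zero_mul, add_zero, neg_mul, one_mul] at hv
            have : (x : F) = 1 := by linear_combination -hv
            exact Units.ext this
          simp [hx]
        right_inv := fun p => rfl }
    rw [Zf, Nat.card_congr e, card_prod_units]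
  · -- upper bound
    rintro n ⟨a, b, c, d, h0, rfl⟩
    rw [Zf, ← card_prod_units]
    classical
    by_cases hcd : c = 0 ∧ d = 0
    · -- f = a + b x ; map to (y, z)
      obtain ⟨hc, hd⟩ := hcd
      have hab : ¬(a = 0 ∧ b = 0) := by
        rintro ⟨ha, hb⟩; exact h0 (by simp [ha, hb, hc, hd])
      refine Nat.card_le_card_of_injective (fun v => v.1.2) ?_
      rintro ⟨⟨x₁, p₁⟩, h1⟩ ⟨⟨x₂, p₂⟩, h2⟩ hp
      simp only at hp
      simp only [fT, hc, hd, zero_mul, add_zero] at h1 h2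
      have hb : b ≠ 0 := by
        rintro rfl
        simp only [zero_mul, add_zero] at h1
        exact hab ⟨h1, rfl⟩
      have hx : (x₁ : F) = x₂ := by
        have : b * (x₁ : F) = b * x₂ := by linear_combination h1 - h2
        exact mul_left_cancel₀ hb this
      exact Subtype.ext (Prod.ext (Units.ext hx) hp)
    · -- (c, d) ≠ (0, 0); map to (x, y or z)
      have hcd' : c ≠ 0 ∨ d ≠ 0 := by tauto
      refine Nat.card_le_card_of_injective
        (fun v => (v.1.1, if a + b * (v.1.1 : F) = 0 then v.1.2.2 else v.1.2.1)) ?_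
      rintro ⟨⟨x₁, y₁, z₁⟩, h1⟩ ⟨⟨x₂, y₂, z₂⟩, h2⟩ hp
      simp only [Prod.mk.injEq] at hp
      obtain ⟨hx, hyz⟩ := hp
      subst hx
      simp only [fT] at h1 h2
      by_cases hax : a + b * (x₁ : F) = 0
      · simp only [if_pos hax] at hyz
        -- z₁ = z₂ =: z ; then c + d x^s y_i^t = 0
        have key : ∀ (y z : Fˣ), a + b * (x₁ : F) + c * z +
            d * (x₁ : F) ^ s * (y : F) ^ t * z = 0 →
            d * (x₁ : F) ^ s * (y : F) ^ t = -c := by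
          intro y z hz
          have h' : (c + d * (x₁ : F) ^ s * (y : F) ^ t) * (z : F) = 0 := by
            linear_combination hz - hax
          have h'' : c + d * (x₁ : F) ^ s * (y : F) ^ t = 0 :=
            (mul_eq_zero.mp h').resolve_right (Units.ne_zero z)
          linear_combination h''
        have k1 := key y₁ z₁ h1
        have k2 := key y₂ z₂ h2
        have hd : d ≠ 0 := by
          rcases hcd' with hc | hd
          · intro hd0; apply hc; rw [hd0] at k1; simpa using k1.symm
          · exact hd
        have hxs : (x₁ : F) ^ s ≠ 0 := pow_ne_zero s (Units.ne_zero x₁)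
        have hyt : (y₁ : F) ^ t = (y₂ : F) ^ t := by
          have : d * (x₁ : F) ^ s * (y₁ : F) ^ t = d * (x₁ : F) ^ s * (y₂ : F) ^ t :=
            k1.trans k2.symm
          exact mul_left_cancel₀ (mul_ne_zero hd hxs) this
        have hy : y₁ = y₂ := by
          apply pow_t_inj h
          exact Units.ext (by push_cast; exact hyt)
        exact Subtype.ext (by simp [hy, hyz])
      · simp only [if_neg hax] at hyz
        subst hyz
        have hh : c + d * (x₁ : F) ^ s * (y₁ : F) ^ t ≠ 0 := by
          intro h'
          apply hax
          have : (c + d * (x₁ : F) ^ s * (y₁ : F) ^ t) * (z₁ : F) = 0 := by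
            rw [h', zero_mul]
          linear_combination h1 - this
        have hz : (z₁ : F) = z₂ := by
          have : (c + d * (x₁ : F) ^ s * (y₁ : F) ^ t) * (z₁ : F) =
              (c + d * (x₁ : F) ^ s * (y₁ : F) ^ t) * (z₂ : F) := by
            linear_combination h1 - h2
          exact mul_left_cancel₀ hh this
        exact Subtype.ext (by simp [Units.ext hz])
end

section
/- Let q > 2 be a prime power and let s, t be natural numbers with t ≥ 1 and gcd(s,t) = 1. If gcd(t, q−1) ≥ 2, then the maximum of Z(f) over all f(x,y,z) = a + b·x + c·z + d·x^s·y^t·z with (a,b,c,d) ≠ (0,0,0,0) equals q·gcd(t, q−1) + (q−1)(q−3); equivalently, the minimum distance of the toric code C_{T(s,t)} is (q−1)^3 − (q−1)(q−3) − q·gcd(t, q−1). -/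
set_option linter.unusedSectionVars false
set_option maxHeartbeats 1000000

open Finset
open scoped Classical

section GroupLemmas

variable {G : Type*} [CommGroup G] [Fintype G]

lemma card_pow_eq_one [IsCyclic G] (m : ℕ) :
    Nat.card {y : G // y ^ m = 1} = Nat.gcd m (Fintype.card G) := by
  obtain ⟨g, hg⟩ := IsCyclic.exists_generator (α := G)
  set n := Fintype.card G with hn
  have hog : orderOf g = n := by
    rw [hn, ← Nat.card_eq_fintype_card]
    exact orderOf_eq_card_of_forall_mem_zpowers hg
  set φ := (powMonoidHom m : G →* G) with hφ
  have hker : Nat.card {y : G // y ^ m = 1} = Nat.card φ.ker := by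
    apply Nat.card_congr
    exact Equiv.subtypeEquivRight (fun y => by
      simp [hφ, MonoidHom.mem_ker, powMonoidHom_apply])
  have hrange : φ.range = Subgroup.zpowers (g ^ m) := by
    ext u
    constructor
    · rintro ⟨y, rfl⟩
      obtain ⟨k, rfl⟩ := hg y
      exact ⟨k, by simp [hφ, powMonoidHom_apply, ← zpow_natCast, ← zpow_mul, mul_comm]⟩
    · rintro ⟨k, rfl⟩
      exact ⟨g ^ k, by simp [hφ, powMonoidHom_apply, ← zpow_natCast, ← zpow_mul, mul_comm]⟩
  have hcard_range : Nat.card φ.range = n / Nat.gcd n m := by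
    rw [hrange, Nat.card_zpowers, orderOf_pow, hog]
  have hmul : Nat.card φ.ker * Nat.card φ.range = n := by
    rw [← Subgroup.index_ker, Subgroup.card_mul_index, Nat.card_eq_fintype_card]
  have hgcd_dvd : Nat.gcd n m ∣ n := Nat.gcd_dvd_left n m
  have hnpos : 0 < n := Fintype.card_pos
  have hgpos : 0 < Nat.gcd n m := Nat.gcd_pos_of_pos_left m hnpos
  rw [hker, Nat.gcd_comm]
  have h2 : Nat.card φ.ker * (n / Nat.gcd n m) = n := by rw [← hcard_range]; exact hmul
  have h3 : 0 < n / Nat.gcd n m := Nat.div_pos (Nat.le_of_dvd hnpos hgcd_dvd) hgpos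
  have h4 : Nat.gcd n m * (n / Nat.gcd n m) = n := Nat.mul_div_cancel' hgcd_dvd
  exact Nat.eq_of_mul_eq_mul_right h3 (by rw [h2, h4])

lemma card_fiber_of_sol {m : ℕ} {u y0 : G} (h : y0 ^ m = u) :
    Nat.card {y : G // y ^ m = u} = Nat.card {y : G // y ^ m = 1} := by
  apply Nat.card_congr
  refine ⟨fun y => ⟨y0⁻¹ * y.1, ?_⟩, fun y => ⟨y0 * y.1, ?_⟩, fun y => by simp, fun y => by simp⟩
  · rw [mul_pow, y.2, ← h, inv_pow, inv_mul_cancel]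
  · rw [mul_pow, y.2, h, mul_one]

lemma card_pow_eq_of_exists [IsCyclic G] {m : ℕ} {u : G} (h : ∃ y : G, y ^ m = u) :
    Nat.card {y : G // y ^ m = u} = Nat.gcd m (Fintype.card G) := by
  obtain ⟨y0, h0⟩ := h
  rw [card_fiber_of_sol h0, card_pow_eq_one]

lemma card_pow_le [IsCyclic G] (m : ℕ) (u : G) :
    Nat.card {y : G // y ^ m = u} ≤ Nat.gcd m (Fintype.card G) := by
  by_cases h : ∃ y : G, y ^ m = u
  · exact (card_pow_eq_of_exists h).le
  · have : IsEmpty {y : G // y ^ m = u} := ⟨fun y => h ⟨y.1, y.2⟩⟩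
    simp [Nat.card_of_isEmpty]

lemma card_pair_fiber (s t : ℕ) (hst : Nat.gcd s t = 1) (u : G) :
    Nat.card {p : G × G // p.1 ^ s * p.2 ^ t = u} = Fintype.card G := by
  set ψ : G × G →* G :=
    { toFun := fun p => p.1 ^ s * p.2 ^ t
      map_one' := by simp
      map_mul' := fun p q => by
        simp only [Prod.fst_mul, Prod.snd_mul, mul_pow]
        exact mul_mul_mul_comm _ _ _ _ } with hψ
  have hsurj : Function.Surjective ψ := by
    intro v
    refine ⟨(v ^ Nat.gcdA s t, v ^ Nat.gcdB s t), ?_⟩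
    have hb := Nat.gcd_eq_gcd_ab s t
    rw [hst] at hb
    show (v ^ Nat.gcdA s t) ^ s * (v ^ Nat.gcdB s t) ^ t = v
    rw [← zpow_natCast _ s, ← zpow_natCast _ t, ← zpow_mul, ← zpow_mul, ← zpow_add,
      mul_comm (Nat.gcdA s t), mul_comm (Nat.gcdB s t), ← hb]
    norm_num
  have hker : Nat.card ψ.ker * Nat.card ψ.range = Fintype.card G * Fintype.card G := by
    rw [← Subgroup.index_ker, Subgroup.card_mul_index, Nat.card_eq_fintype_card,
      Fintype.card_prod]
  have hrange : ψ.range = ⊤ := MonoidHom.range_eq_top.2 hsurj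
  rw [hrange, Subgroup.card_top] at hker
  rw [Nat.card_eq_fintype_card (α := G)] at hker
  have hkcard : Nat.card ψ.ker = Fintype.card G :=
    Nat.eq_of_mul_eq_mul_right Fintype.card_pos hker
  obtain ⟨p0, hp0⟩ := hsurj u
  have e1 : Nat.card {p : G × G // p.1 ^ s * p.2 ^ t = u}
      = Nat.card {p : G × G // ψ p = u} := rfl
  have e2 : Nat.card {p : G × G // ψ p = u} = Nat.card ψ.ker := by
    apply Nat.card_congr
    refine ⟨fun p => ⟨p0⁻¹ * p.1, ?_⟩, fun p => ⟨p0 * p.1, ?_⟩,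
      fun p => by simp, fun p => by simp⟩
    · simp [MonoidHom.mem_ker, map_mul, p.2, hp0]
    · have := p.2
      rw [MonoidHom.mem_ker] at this
      simp [map_mul, this, hp0]
  rw [e1, e2, hkcard]

lemma sum_card_fiber (s t : ℕ) (hst : Nat.gcd s t = 1) (u : G) :
    ∑ x : G, Nat.card {y : G // x ^ s * y ^ t = u} = Fintype.card G := by
  rw [← card_pair_fiber s t hst u]
  rw [Nat.card_congr (Equiv.subtypeProdEquivSigmaSubtype (fun a b : G => a ^ s * b ^ t = u))]
  simp [Nat.card_eq_fintype_card, Fintype.card_sigma]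

end GroupLemmas

section FieldLemmas

lemma card_prod3 {α β γ : Type} [Fintype α] [Fintype β] [Fintype γ] (P : α × β × γ → Prop) :
    Nat.card {v : α × β × γ // P v} = ∑ x : α, ∑ y : β, Nat.card {z : γ // P (x, y, z)} := by
  rw [Nat.card_congr (Equiv.subtypeProdEquivSigmaSubtype (fun a (w : β × γ) => P (a, w)))]
  rw [Nat.card_eq_fintype_card, Fintype.card_sigma]
  refine Finset.sum_congr rfl fun x _ => ?_
  rw [← Nat.card_eq_fintype_card,
    Nat.card_congr (Equiv.subtypeProdEquivSigmaSubtype (fun b (z : γ) => P (x, b, z))),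
    Nat.card_eq_fintype_card, Fintype.card_sigma]
  exact Finset.sum_congr rfl fun y _ => (Nat.card_eq_fintype_card).symm

variable {F : Type} [Field F] [Fintype F]

lemma card_z (A B : F) :
    Nat.card {z : Fˣ // B + A * (z : F) = 0} =
      if A = 0 then (if B = 0 then Fintype.card Fˣ else 0)
      else (if B = 0 then 0 else 1) := by
  rcases eq_or_ne A 0 with hA | hA
  · rcases eq_or_ne B 0 with hB | hB
    · rw [if_pos hA, if_pos hB]
      rw [Nat.card_congr (Equiv.subtypeEquivRight (q := fun _ => True)
        (fun z => by simp [hA, hB]))]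
      rw [Nat.card_congr (Equiv.subtypeUnivEquiv (fun _ => trivial)), Nat.card_eq_fintype_card]
    · rw [if_pos hA, if_neg hB]
      have : IsEmpty {z : Fˣ // B + A * (z : F) = 0} :=
        ⟨fun z => hB (by simpa [hA] using z.2)⟩
      exact Nat.card_of_isEmpty
  · rcases eq_or_ne B 0 with hB | hB
    · rw [if_neg hA, if_pos hB]
      have : IsEmpty {z : Fˣ // B + A * (z : F) = 0} := by
        refine ⟨fun zz => ?_⟩
        obtain ⟨z, h2⟩ := zz
        rw [hB, zero_add, mul_eq_zero] at h2
        rcases h2 with hh | hh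
        · exact hA hh
        · exact z.ne_zero hh
      exact Nat.card_of_isEmpty
    · rw [if_neg hA, if_neg hB]
      have hval : (-B / A) ≠ 0 := div_ne_zero (neg_ne_zero.2 hB) hA
      set z0 : Fˣ := Units.mk0 (-B / A) hval with hz0
      have hiff : ∀ z : Fˣ, (B + A * (z : F) = 0) ↔ z = z0 := by
        intro z
        rw [Units.ext_iff, hz0, Units.val_mk0]
        constructor
        · intro hzz
          field_simp
          linear_combination hzz
        · intro hzz
          rw [hzz]
          field_simp
          ring
      rw [Nat.card_congr (Equiv.subtypeEquivRight hiff), Nat.card_eq_fintype_card,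
        Fintype.card_subtype_eq]

lemma Zf_eq (s t : ℕ) (a b c d : F) :
    Zf (fT s t a b c d) = ∑ x : Fˣ, (if a + b * (x : F) = 0
      then (Fintype.card Fˣ) * Nat.card {y : Fˣ // c + d * (x : F) ^ s * (y : F) ^ t = 0}
      else (Fintype.card Fˣ) - Nat.card {y : Fˣ // c + d * (x : F) ^ s * (y : F) ^ t = 0}) := by
  rw [Zf, card_prod3]
  refine Finset.sum_congr rfl fun x _ => ?_
  have hz : ∀ y z : Fˣ, (fT s t a b c d (x, y, z) = 0) ↔
      ((a + b * (x : F)) + (c + d * (x : F) ^ s * (y : F) ^ t) * (z : F) = 0) := by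
    intro y z
    rw [fT]
    constructor <;> intro hh <;> linear_combination hh
  have key : ∀ y : Fˣ, Nat.card {z : Fˣ // fT s t a b c d (x, y, z) = 0}
      = if (c + d * (x : F) ^ s * (y : F) ^ t) = 0
        then (if a + b * (x : F) = 0 then Fintype.card Fˣ else 0)
        else (if a + b * (x : F) = 0 then 0 else 1) := fun y => by
    rw [Nat.card_congr (Equiv.subtypeEquivRight (hz y)), card_z]
  rw [Finset.sum_congr rfl fun y _ => key y]
  have hcard : ∀ (P : Fˣ → Prop),
      Nat.card {y : Fˣ // P y} = (univ.filter P).card := fun P => by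
    rw [Nat.card_eq_fintype_card, Fintype.card_subtype]
  by_cases hB : a + b * (x : F) = 0
  · simp only [hB, if_true]
    rw [Finset.sum_ite, Finset.sum_const, Finset.sum_const, smul_eq_mul, smul_eq_mul,
      mul_zero, add_zero, hcard, mul_comm]
  · simp only [hB, if_false]
    rw [Finset.sum_ite, Finset.sum_const, Finset.sum_const, smul_eq_mul, smul_eq_mul,
      mul_zero, mul_one, zero_add, hcard]
    have := Finset.card_filter_add_card_filter_not
      (s := (univ : Finset Fˣ)) (p := fun y => c + d * (x : F) ^ s * (y : F) ^ t = 0)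
    rw [Finset.card_univ] at this
    omega

lemma m_eq_unit (s t : ℕ) {c d : F} (hc : c ≠ 0) (hd : d ≠ 0) (x : Fˣ) :
    Nat.card {y : Fˣ // c + d * (x : F) ^ s * (y : F) ^ t = 0}
      = Nat.card {y : Fˣ // y ^ t = (x ^ s)⁻¹ * Units.mk0 (-c / d)
          (div_ne_zero (neg_ne_zero.2 hc) hd)} := by
  apply Nat.card_congr
  apply Equiv.subtypeEquivRight
  intro y
  rw [eq_inv_mul_iff_mul_eq, Units.ext_iff, Units.val_mul, Units.val_mk0,
    Units.val_pow_eq_pow_val, Units.val_pow_eq_pow_val]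
  constructor
  · intro hh
    field_simp
    linear_combination hh
  · intro hh
    field_simp at hh
    linear_combination hh

lemma m_le (s t : ℕ) {c d : F} (hc : c ≠ 0) (hd : d ≠ 0) (x : Fˣ) :
    Nat.card {y : Fˣ // c + d * (x : F) ^ s * (y : F) ^ t = 0}
      ≤ Nat.gcd t (Fintype.card F - 1) := by
  rw [m_eq_unit s t hc hd, ← Fintype.card_units (α := F)]
  exact card_pow_le t _

lemma m_sum (s t : ℕ) (hst : Nat.gcd s t = 1) {c d : F} (hc : c ≠ 0) (hd : d ≠ 0) :
    ∑ x : Fˣ, Nat.card {y : Fˣ // c + d * (x : F) ^ s * (y : F) ^ t = 0}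
      = Fintype.card Fˣ := by
  rw [← sum_card_fiber s t hst (Units.mk0 (-c / d) (div_ne_zero (neg_ne_zero.2 hc) hd))]
  refine Finset.sum_congr rfl fun x _ => ?_
  rw [m_eq_unit s t hc hd]
  exact Nat.card_congr (Equiv.subtypeEquivRight fun y => by rw [eq_inv_mul_iff_mul_eq])

lemma Bzero_iff {a b : F} (ha : a ≠ 0) (hb : b ≠ 0) (x : Fˣ) :
    a + b * (x : F) = 0 ↔ x = Units.mk0 (-a / b) (div_ne_zero (neg_ne_zero.2 ha) hb) := by
  rw [Units.ext_iff, Units.val_mk0]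
  constructor
  · intro hh
    field_simp
    linear_combination hh
  · intro hh
    rw [hh]
    field_simp
    ring

lemma Z_main (s t : ℕ) (hst : Nat.gcd s t = 1) {a b c d : F}
    (ha : a ≠ 0) (hb : b ≠ 0) (hc : c ≠ 0) (hd : d ≠ 0) :
    Zf (fT s t a b c d) =
      (Fintype.card Fˣ) * Nat.card {y : Fˣ //
          c + d * ((Units.mk0 (-a / b) (div_ne_zero (neg_ne_zero.2 ha) hb) : Fˣ) : F) ^ s
            * (y : F) ^ t = 0}
        + ((Fintype.card Fˣ - 1) * Fintype.card Fˣ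
          - (Fintype.card Fˣ - Nat.card {y : Fˣ //
            c + d * ((Units.mk0 (-a / b) (div_ne_zero (neg_ne_zero.2 ha) hb) : Fˣ) : F) ^ s
              * (y : F) ^ t = 0})) := by
  set n := Fintype.card Fˣ with hn
  set x0 : Fˣ := Units.mk0 (-a / b) (div_ne_zero (neg_ne_zero.2 ha) hb) with hx0
  set m : Fˣ → ℕ := fun x =>
    Nat.card {y : Fˣ // c + d * (x : F) ^ s * (y : F) ^ t = 0} with hm
  have hmle_n : ∀ x : Fˣ, m x ≤ n := by
    intro x
    have hle : Nat.card {y : Fˣ // c + d * (x : F) ^ s * (y : F) ^ t = 0} ≤ Nat.card Fˣ :=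
      Nat.card_le_card_of_injective Subtype.val Subtype.val_injective
    exact hle.trans_eq Nat.card_eq_fintype_card
  rw [Zf_eq s t a b c d]
  have h1 : ∀ x : Fˣ, (if a + b * (x : F) = 0
      then n * m x else n - m x) = (if x = x0 then n * m x else n - m x) := fun x => by
    simp only [Bzero_iff ha hb, ← hx0]
  rw [Finset.sum_congr rfl fun x _ => h1 x]
  rw [← Finset.add_sum_erase _ _ (Finset.mem_univ x0), if_pos rfl]
  congr 1
  have h2 : ∀ x ∈ univ.erase x0, (if x = x0 then n * m x else n - m x) = n - m x := by
    intro x hx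
    rw [if_neg (Finset.ne_of_mem_erase hx)]
  rw [Finset.sum_congr rfl h2]
  have h3 : ∑ x ∈ univ.erase x0, (n - m x)
      = ∑ x ∈ univ.erase x0, n - ∑ x ∈ univ.erase x0, m x := by
    rw [eq_tsub_iff_add_eq_of_le (Finset.sum_le_sum fun x _ => hmle_n x), ← Finset.sum_add_distrib]
    exact Finset.sum_congr rfl fun x _ => Nat.sub_add_cancel (hmle_n x)
  rw [h3, Finset.sum_const, Finset.card_erase_of_mem (Finset.mem_univ x0), Finset.card_univ,
    smul_eq_mul]
  congr 1
  have h4 := Finset.add_sum_erase univ m (Finset.mem_univ x0)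
  rw [m_sum s t hst hc hd] at h4
  have h5 : Nat.card {y : Fˣ //
      c + d * ((Units.mk0 (-a / b) (div_ne_zero (neg_ne_zero.2 ha) hb) : Fˣ) : F) ^ s
        * (y : F) ^ t = 0} = m x0 := rfl
  rw [h5]
  omega

end FieldLemmas
/-- If `gcd(t, q−1) ≥ 2`, the maximum of `Z(f)` over nonzero
`f = a + b·x + c·z + d·x^s·y^t·z` equals `q·gcd(t,q−1) + (q−1)(q−3)`;
equivalently the minimum distance of `C_{T(s,t)}` is
`(q−1)³ − (q−1)(q−3) − q·gcd(t,q−1)`. -/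
theorem stmt1 (F : Type) [Field F] [Fintype F] (s t : ℕ)
    (hq : 2 < Fintype.card F) (ht : 1 ≤ t) (hst : Nat.gcd s t = 1)
    (h : 2 ≤ Nat.gcd t (Fintype.card F - 1)) :
    IsGreatest {n : ℕ | ∃ a b c d : F, (a, b, c, d) ≠ (0, 0, 0, 0) ∧
        n = Zf (fT s t a b c d)}
      (Fintype.card F * Nat.gcd t (Fintype.card F - 1) +
        (Fintype.card F - 1) * (Fintype.card F - 3)) := by
  have hcardu : Fintype.card Fˣ = Fintype.card F - 1 := by
    rw [← Nat.card_eq_fintype_card, Nat.card_units, Nat.card_eq_fintype_card]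
  obtain ⟨n, hn⟩ : ∃ n, Fintype.card Fˣ = n := ⟨_, rfl⟩
  have hn2 : 2 ≤ n := by omega
  have hqn : Fintype.card F = n + 1 := by omega
  have he : Fintype.card F - 1 = n := by omega
  rw [he] at h
  rw [he, hqn]
  have h3 : n + 1 - 3 = n - 2 := by omega
  rw [h3]
  have hrn : Nat.gcd t n ≤ n := Nat.le_of_dvd (by omega) (Nat.gcd_dvd_right t n)
  set r := Nat.gcd t n with hrdef
  have hone : (1 : ℕ) ≤ n := by omega
  have hlen : n ≤ (n - 1) * n := by
    calc n = 1 * n := (one_mul n).symm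
    _ ≤ (n - 1) * n := Nat.mul_le_mul_right n (by omega)
  have hnnM : n * n ≤ (n + 1) * r + n * (n - 2) := by
    zify [hn2]
    have hr2' : (2 : ℤ) ≤ (r : ℤ) := by exact_mod_cast h
    have hn0' : (0 : ℤ) ≤ (n : ℤ) := by positivity
    nlinarith [mul_le_mul_of_nonneg_left hr2' (by linarith : (0:ℤ) ≤ (n:ℤ) + 1)]
  constructor
  · -- membership: witness a = -1, b = 1, c = -1, d = 1
    have ha : (-1 : F) ≠ 0 := neg_ne_zero.2 one_ne_zero
    have hb : (1 : F) ≠ 0 := one_ne_zero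
    refine ⟨-1, 1, -1, 1, by simp, ?_⟩
    rw [Z_main s t hst ha hb ha hb, hn]
    have hval : ((Units.mk0 (-(-1 : F) / 1) (div_ne_zero (neg_ne_zero.2 ha) hb) : Fˣ) : F)
        = 1 := by rw [Units.val_mk0]; norm_num
    have hiff : ∀ y : Fˣ, ((-1 : F) + 1 *
        ((Units.mk0 (-(-1 : F) / 1) (div_ne_zero (neg_ne_zero.2 ha) hb) : Fˣ) : F) ^ s
          * (y : F) ^ t = 0) ↔ y ^ t = 1 := fun y => by
      rw [hval, Units.ext_iff, Units.val_pow_eq_pow_val, Units.val_one]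
      constructor <;> intro hh <;> linear_combination hh
    have hm : Nat.card {y : Fˣ // (-1 : F) + 1 *
        ((Units.mk0 (-(-1 : F) / 1) (div_ne_zero (neg_ne_zero.2 ha) hb) : Fˣ) : F) ^ s
          * (y : F) ^ t = 0} = r := by
      rw [Nat.card_congr (Equiv.subtypeEquivRight hiff), card_pow_eq_one, hn]
    rw [hm]
    have hsub : n - r ≤ (n - 1) * n := le_trans (Nat.sub_le n r) hlen
    zify [hn2, hrn, hsub, hone]
    ring
  · -- upper bound
    rintro N ⟨a, b, c, d, hne, rfl⟩
    have hrr : Nat.gcd t (Fintype.card F - 1) = r := by rw [he]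
    by_cases hmain : a ≠ 0 ∧ b ≠ 0 ∧ c ≠ 0 ∧ d ≠ 0
    · obtain ⟨ha, hb, hc, hd⟩ := hmain
      rw [Z_main s t hst ha hb hc hd, hn]
      set C := Nat.card {y : Fˣ //
        c + d * ((Units.mk0 (-a / b) (div_ne_zero (neg_ne_zero.2 ha) hb) : Fˣ) : F) ^ s
          * (y : F) ^ t = 0} with hC
      have hCr : C ≤ r := (m_le s t hc hd _).trans_eq hrr
      have hCn : C ≤ n := le_trans hCr hrn
      have hsub : n - C ≤ (n - 1) * n := le_trans (Nat.sub_le n C) hlen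
      zify [hn2, hCn, hsub, hone]
      have hCr' : (C : ℤ) ≤ (r : ℤ) := by exact_mod_cast hCr
      nlinarith [mul_le_mul_of_nonneg_left hCr' (by positivity : (0:ℤ) ≤ (n:ℤ) + 1)]
    · -- some coefficient vanishes: Zf ≤ n * n
      refine le_trans ?_ hnnM
      rw [Zf_eq s t a b c d, hn]
      by_cases hd : d = 0
      · subst hd
        by_cases hc : c = 0
        · subst hc
          have hmx : ∀ x : Fˣ, Nat.card
              {y : Fˣ // (0 : F) + 0 * (x : F) ^ s * (y : F) ^ t = 0} = n := fun x => by
            rw [Nat.card_congr (Equiv.subtypeEquivRight (q := fun _ => True)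
              (fun y => by simp)),
              Nat.card_congr (Equiv.subtypeUnivEquiv (fun _ => trivial)),
              Nat.card_eq_fintype_card, hn]
          simp only [hmx, Nat.sub_self]
          rw [Finset.sum_ite, Finset.sum_const, Finset.sum_const, smul_eq_mul, smul_eq_mul,
            mul_zero, add_zero]
          have hab : ¬(a = 0 ∧ b = 0) := by
            rintro ⟨rfl, rfl⟩
            exact hne rfl
          have hcle : (univ.filter (fun x : Fˣ => a + b * (x : F) = 0)).card ≤ 1 := by
            refine Finset.card_le_one.2 (fun x hx y hy => ?_)
            rw [Finset.mem_filter] at hx hy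
            by_cases hb : b = 0
            · exfalso
              apply hab
              refine ⟨?_, hb⟩
              have := hx.2
              rw [hb, zero_mul, add_zero] at this
              exact this
            · have hxy : b * (x : F) = b * (y : F) := by linear_combination hx.2 - hy.2
              have : (x : F) = (y : F) := mul_left_cancel₀ hb hxy
              exact Units.ext this
          calc (univ.filter (fun x : Fˣ => a + b * (x : F) = 0)).card * (n * n)
              ≤ 1 * (n * n) := Nat.mul_le_mul_right _ hcle
            _ = n * n := one_mul _
        · -- d = 0, c ≠ 0
          have hmx : ∀ x : Fˣ, Nat.card
              {y : Fˣ // c + 0 * (x : F) ^ s * (y : F) ^ t = 0} = 0 := fun x => by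
            have : IsEmpty {y : Fˣ // c + 0 * (x : F) ^ s * (y : F) ^ t = 0} :=
              ⟨fun y => hc (by simpa using y.2)⟩
            exact Nat.card_of_isEmpty
          simp only [hmx, Nat.mul_zero, Nat.sub_zero]
          calc ∑ x : Fˣ, (if a + b * (x : F) = 0 then 0 else n)
              ≤ ∑ _x : Fˣ, n := Finset.sum_le_sum (fun x _ => by split <;> omega)
            _ = n * n := by rw [Finset.sum_const, Finset.card_univ, hn, smul_eq_mul]
      · by_cases hc : c = 0
        · -- c = 0, d ≠ 0
          subst hc
          have hmx : ∀ x : Fˣ, Nat.card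
              {y : Fˣ // (0 : F) + d * (x : F) ^ s * (y : F) ^ t = 0} = 0 := fun x => by
            have : IsEmpty {y : Fˣ // (0 : F) + d * (x : F) ^ s * (y : F) ^ t = 0} := by
              refine ⟨fun y => ?_⟩
              have h2 := y.2
              rw [zero_add] at h2
              exact (mul_ne_zero (mul_ne_zero hd (pow_ne_zero _ x.ne_zero))
                (pow_ne_zero _ y.1.ne_zero)) h2
            exact Nat.card_of_isEmpty
          simp only [hmx, Nat.mul_zero, Nat.sub_zero]
          calc ∑ x : Fˣ, (if a + b * (x : F) = 0 then 0 else n)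
              ≤ ∑ _x : Fˣ, n := Finset.sum_le_sum (fun x _ => by split <;> omega)
            _ = n * n := by rw [Finset.sum_const, Finset.card_univ, hn, smul_eq_mul]
        · -- c ≠ 0, d ≠ 0, and a = 0 or b = 0
          have hab : a = 0 ∨ b = 0 := by tauto
          have hble : ∀ x : Fˣ, Nat.card
              {y : Fˣ // c + d * (x : F) ^ s * (y : F) ^ t = 0} ≤ n :=
            fun x => le_trans ((m_le s t hc hd x).trans_eq hrr) hrn
          by_cases hb : b = 0
          · subst hb
            by_cases ha : a = 0
            · subst ha
              rw [Finset.sum_congr rfl (fun x _ => if_pos (by ring))]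
              rw [← Finset.mul_sum, m_sum s t hst hc hd, hn]
            · rw [Finset.sum_congr rfl (fun x _ => if_neg (by simp [ha]))]
              calc ∑ x : Fˣ, (n - Nat.card
                    {y : Fˣ // c + d * (x : F) ^ s * (y : F) ^ t = 0})
                  ≤ ∑ _x : Fˣ, n := Finset.sum_le_sum (fun x _ => Nat.sub_le _ _)
                _ = n * n := by rw [Finset.sum_const, Finset.card_univ, hn, smul_eq_mul]
          · have ha : a = 0 := by tauto
            subst ha
            rw [Finset.sum_congr rfl (fun x _ => if_neg (by
              simp only [zero_add]
              exact mul_ne_zero hb x.ne_zero))]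
            calc ∑ x : Fˣ, (n - Nat.card
                  {y : Fˣ // c + d * (x : F) ^ s * (y : F) ^ t = 0})
                ≤ ∑ _x : Fˣ, n := Finset.sum_le_sum (fun x _ => Nat.sub_le _ _)
              _ = n * n := by rw [Finset.sum_const, Finset.card_univ, hn, smul_eq_mul]
end

section
/- Let q > 2 be a prime power and let s, t be natural numbers with t ≥ 1. If a, b, c, d are all nonzero elements of 𝔽_q and f(x,y,z) = a + b·x + c·z + d·x^s·y^t·z, then Z(f) ≤ q·gcd(t, q−1) + (q−1)(q−3). -/
open Finset Function

section CyclicGroup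

variable {G : Type*} [CommGroup G] [Fintype G] [DecidableEq G] [IsCyclic G]

theorem IsCyclic.card_filter_pow_eq_pow (t : ℕ) (u : G) :
    #{y : G | y ^ t = u ^ t} = (Nat.card G).gcd t := by
  have hfiber := MonoidHom.card_fiber_eq_of_mem_range (powMonoidHom t : G →* G)
    (Set.mem_range_self u) (Set.mem_range_self 1)
  simp only [powMonoidHom_apply, one_pow] at hfiber
  rw [hfiber, ← IsCyclic.card_powMonoidHom_ker, Nat.card_eq_fintype_card, Fintype.card_subtype]
  simp only [MonoidHom.mem_ker, powMonoidHom_apply]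

theorem IsCyclic.card_image_pow_mul_gcd (t : ℕ) :
    #(univ.image fun y : G => y ^ t) * (Nat.card G).gcd t = Nat.card G := by
  conv_rhs => rw [Nat.card_eq_fintype_card, ← card_univ,
    card_eq_sum_card_image (fun y : G => y ^ t) univ]
  refine (sum_const_nat ?_).symm
  simp only [mem_image, mem_univ, true_and, forall_exists_index]
  rintro _ u rfl
  exact IsCyclic.card_filter_pow_eq_pow t u

end CyclicGroup

theorem sum_comp_add_le_sum {ι α : Type*} [Fintype ι] [Fintype α] [DecidableEq α] (h : α → ℕ)
    {φ : ι → α} (hφ : Injective φ) {b : α} (hb : ∀ i, φ i ≠ b) :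
    ∑ i, h (φ i) + h b ≤ ∑ a, h a := by
  rw [← sum_image (s := univ) fun i _ j _ hij => hφ hij, ← sum_erase_add univ h (mem_univ b)]
  gcongr
  intro a ha
  obtain ⟨i, -, rfl⟩ := mem_image.mp ha
  exact mem_erase.mpr ⟨hb i, mem_univ _⟩

section RootCount

variable {F : Type*} [Field F] [Fintype F] [DecidableEq F]

def rootCount (t : ℕ) (c : F) : ℕ := #{y : Fˣ | (y : F) ^ t = c}

theorem rootCount_pow (t : ℕ) (u : Fˣ) :
    rootCount t ((u : F) ^ t) = Nat.gcd t (Fintype.card F - 1) := by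
  rw [Nat.gcd_comm, ← Fintype.card_units, ← Nat.card_eq_fintype_card,
    ← IsCyclic.card_filter_pow_eq_pow t u]
  simp only [rootCount, Units.ext_iff, Units.val_pow_eq_pow_val]

theorem sum_rootCount (t : ℕ) : ∑ c : F, rootCount t c = Fintype.card F - 1 := by
  rw [← Fintype.card_units, ← card_univ]
  exact (card_eq_sum_card_fiberwise fun (y : Fˣ) _ => mem_univ ((y : F) ^ t)).symm

theorem exists_pow_eq_of_rootCount_ne_zero {t : ℕ} {c : F} (h : rootCount t c ≠ 0) :
    ∃ y : Fˣ, (y : F) ^ t = c := by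
  obtain ⟨y, hy⟩ := card_pos.mp (Nat.pos_of_ne_zero h)
  exact ⟨y, (mem_filter.mp hy).2⟩

end RootCount

section RequiredPow

variable {F : Type} [Field F] {s t : ℕ} {a b c d : F} {x : Fˣ}

def omittedPow (s : ℕ) (c d : F) (x : Fˣ) : F := -c / (d * (x : F) ^ s)

def requiredPow (s : ℕ) (a b c d : F) (x z : Fˣ) : F :=
  omittedPow s c d x - (a + b * x) / (d * (x : F) ^ s * z)

theorem fT_eq_zero_iff (hd : d ≠ 0) (x y z : Fˣ) :
    fT s t a b c d (x, y, z) = 0 ↔ (y : F) ^ t = requiredPow s a b c d x z := by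
  have := x.ne_zero
  have := z.ne_zero
  simp only [fT, requiredPow, omittedPow]
  field_simp
  constructor <;> intro h <;> linear_combination h

theorem requiredPow_eq_omittedPow (hx : a + b * x = 0) (z : Fˣ) :
    requiredPow s a b c d x z = omittedPow s c d x := by
  simp [requiredPow, hx]

theorem requiredPow_injective (hd : d ≠ 0) (hx : a + b * x ≠ 0) :
    Injective (requiredPow s a b c d x) := by
  intro z₁ z₂ h
  have := x.ne_zero
  have := z₁.ne_zero
  have := z₂.ne_zero
  simp only [requiredPow, sub_right_inj] at h
  field_simp at h
  exact Units.ext h.symm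

theorem requiredPow_ne_omittedPow (hd : d ≠ 0) (hx : a + b * x ≠ 0) (z : Fˣ) :
    requiredPow s a b c d x z ≠ omittedPow s c d x := by
  have := x.ne_zero
  have := z.ne_zero
  rw [requiredPow, Ne, sub_eq_self]
  exact div_ne_zero hx (by positivity)

theorem omittedPow_mul_inv_pow (hd : d ≠ 0) (x v : Fˣ) :
    omittedPow s c d (x * (v ^ t)⁻¹) = omittedPow s c d x * ((v : F) ^ s) ^ t := by
  have := x.ne_zero
  have := v.ne_zero
  simp only [omittedPow, Units.val_mul, Units.val_inv_eq_inv_val, Units.val_pow_eq_pow_val]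
  rw [mul_pow, inv_pow, ← pow_mul, ← pow_mul, mul_comm t s]
  field_simp

variable [Fintype F] [DecidableEq F]

theorem Zf_fT_eq_sum (hd : d ≠ 0) :
    Zf (fT s t a b c d) = ∑ x, ∑ z, rootCount t (requiredPow s a b c d x z) := by
  rw [Zf, Nat.card_eq_fintype_card, Fintype.card_subtype, card_filter, Fintype.sum_prod_type]
  refine sum_congr rfl fun x _ => ?_
  rw [Fintype.sum_prod_type, sum_comm]
  refine sum_congr rfl fun z _ => ?_
  simp only [rootCount, card_filter, fT_eq_zero_iff hd]

theorem sum_rootCount_requiredPow_add_le (hd : d ≠ 0) (hx : a + b * x ≠ 0) :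
    ∑ z, rootCount t (requiredPow s a b c d x z) + rootCount t (omittedPow s c d x) ≤
      Fintype.card F - 1 :=
  sum_rootCount (F := F) t ▸
    sum_comp_add_le_sum _ (requiredPow_injective hd hx) (requiredPow_ne_omittedPow hd hx)

theorem card_units_le_sum_rootCount_omittedPow (hd : d ≠ 0) (x₀ y₀ : Fˣ)
    (h : omittedPow s c d x₀ = (y₀ : F) ^ t) :
    Fintype.card F - 1 ≤ ∑ x, rootCount t (omittedPow s c d x) := by
  set S := (univ.image fun v : Fˣ => v ^ t).image fun w => x₀ * w⁻¹
  calc Fintype.card F - 1 = #S * Nat.gcd t (Fintype.card F - 1) := by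
        rw [card_image_of_injective _ fun w₁ w₂ hw => by simpa using hw, Nat.gcd_comm,
          ← Fintype.card_units, ← Nat.card_eq_fintype_card, IsCyclic.card_image_pow_mul_gcd]
    _ = ∑ x ∈ S, rootCount t (omittedPow s c d x) := by
        refine (sum_const_nat ?_).symm
        simp only [S, mem_image, mem_univ, true_and, forall_exists_index]
        rintro _ _ ⟨⟨v, rfl⟩, rfl⟩
        rw [omittedPow_mul_inv_pow hd, h, ← mul_pow, ← Units.val_pow_eq_pow_val,
          ← Units.val_mul, rootCount_pow]
    _ ≤ ∑ x, rootCount t (omittedPow s c d x) := sum_le_sum_of_subset (subset_univ S)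

end RequiredPow

theorem Zf_fT_add_sum_rootCount_le {F : Type} [Field F] [Fintype F] [DecidableEq F]
    (s t : ℕ) {a b c d : F} (hb : b ≠ 0) (hd : d ≠ 0) {x₀ : Fˣ} (hx₀ : a + b * x₀ = 0) :
    Zf (fT s t a b c d) + ∑ x, rootCount t (omittedPow s c d x) ≤
      Fintype.card F * rootCount t (omittedPow s c d x₀) +
        (Fintype.card F - 2) * (Fintype.card F - 1) := by
  have hq : 1 ≤ Fintype.card F := Fintype.card_pos
  have hx : ∀ x ∈ univ.erase x₀, a + b * x ≠ 0 := fun x hx h ↦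
    ne_of_mem_erase hx (Units.ext (mul_left_cancel₀ hb (add_left_cancel (h.trans hx₀.symm))))
  rw [Zf_fT_eq_sum hd, ← sum_add_distrib, ← add_sum_erase _ _ (mem_univ x₀)]
  gcongr ?_ + ?_
  · simp only [requiredPow_eq_omittedPow hx₀, sum_const, card_univ, Fintype.card_units,
      smul_eq_mul]
    rw [← Nat.succ_mul, Nat.succ_eq_add_one, Nat.sub_add_cancel hq]
  · calc _ ≤ ∑ x ∈ univ.erase x₀, (Fintype.card F - 1) :=
          sum_le_sum fun x hxe ↦ sum_rootCount_requiredPow_add_le hd (hx x hxe)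
      _ = _ := by
          rw [sum_const, card_erase_of_mem (mem_univ _), card_univ, Fintype.card_units,
            smul_eq_mul, Nat.sub_sub]

theorem stmt2_general (F : Type) [Field F] [Fintype F] (s t : ℕ)
    (a b c d : F) (ha : a ≠ 0) (hb : b ≠ 0) (hd : d ≠ 0) :
    Zf (fT s t a b c d) ≤
      Fintype.card F * Nat.gcd t (Fintype.card F - 1) +
        (Fintype.card F - 1) * (Fintype.card F - 3) := by
  classical
  obtain ⟨x₀, hx₀⟩ : ∃ x₀ : Fˣ, a + b * x₀ = 0 :=
    ⟨Units.mk0 (-a / b) (by simp [ha, hb]), by rw [Units.val_mk0]; field_simp; ring⟩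
  have hZ := Zf_fT_add_sum_rootCount_le s t (c := c) hb hd hx₀
  have harith : (Fintype.card F - 2) * (Fintype.card F - 1) ≤
      (Fintype.card F - 1) * (Fintype.card F - 3) + (Fintype.card F - 1) := by
    rw [← mul_add_one, mul_comm]
    exact Nat.mul_le_mul_left _ (by omega)
  rcases eq_or_ne (rootCount t (omittedPow s c d x₀)) 0 with h₀ | h₀
  · have hg : 0 < Nat.gcd t (Fintype.card F - 1) :=
      Nat.gcd_pos_of_pos_right _ (by have := Fintype.one_lt_card (α := F); omega)
    have := Nat.le_mul_of_pos_right (Fintype.card F) hg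
    rw [h₀, mul_zero, zero_add] at hZ
    omega
  · obtain ⟨y₀, hy₀⟩ := exists_pow_eq_of_rootCount_ne_zero h₀
    have hsum := card_units_le_sum_rootCount_omittedPow hd x₀ y₀ hy₀.symm
    rw [← hy₀, rootCount_pow] at hZ
    omega

/-- If all of `a, b, c, d` are nonzero, then
`Z(f) ≤ q·gcd(t, q−1) + (q−1)(q−3)`. -/
theorem stmt2 (F : Type) [Field F] [Fintype F] (s t : ℕ)
    (hq : 2 < Fintype.card F) (ht : 1 ≤ t)
    (a b c d : F) (ha : a ≠ 0) (hb : b ≠ 0) (hc : c ≠ 0) (hd : d ≠ 0) :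
    Zf (fT s t a b c d) ≤
      Fintype.card F * Nat.gcd t (Fintype.card F - 1) +
        (Fintype.card F - 1) * (Fintype.card F - 3) :=
  stmt2_general F s t a b c d ha hb hd
end

section
/- Let q > 2 be a prime power and let s, t be natural numbers with t ≥ 1 and gcd(s,t) = 1. Then there exist a, b, c, d, all nonzero elements of 𝔽_q, such that the polynomial f(x,y,z) = a + b·x + c·z + d·x^s·y^t·z satisfies Z(f) = q·gcd(t, q−1) + (q−1)(q−3). -/
/-!
Take `a = b = c = 1` and `d = -(-1)^s`, so that `f = (1 + x) + z (1 - (-1)^s x^s y^t)`.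
On the plane `x = -1` the polynomial is `z (1 - y^t)`, which vanishes for every `z` exactly
when `y^t = 1`: this gives `(q - 1) gcd(t, q - 1)` zeros. For `x ≠ -1` there is exactly one `z`
unless `x^s y^t = (-1)^s`, in which case there is none. As `gcd(s, t) = 1`, the homomorphism
`(x, y) ↦ x^s y^t` maps `(𝔽_q^*)²` onto `𝔽_q^*`, so the excluded pairs form a fibre of size
`q - 1`, of which `gcd(t, q - 1)` lie on `x = -1`.
-/

open Finset

section PowMulPow

variable {G : Type*} [CommGroup G]

def powMulPow (s t : ℕ) : G × G →* G := (powMonoidHom s).coprod (powMonoidHom t)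

@[simp]
lemma powMulPow_apply (s t : ℕ) (p : G × G) : powMulPow s t p = p.1 ^ s * p.2 ^ t := rfl

variable {s t : ℕ}

lemma powMulPow_surjective (hst : s.Coprime t) : Function.Surjective (powMulPow (G := G) s t) := by
  intro g
  refine ⟨(g ^ s.gcdA t, g ^ s.gcdB t), ?_⟩
  have hbezout : (s : ℤ) * s.gcdA t + t * s.gcdB t = 1 := by
    rw [← Nat.gcd_eq_gcd_ab, hst, Nat.cast_one]
  simp only [powMulPow_apply, ← zpow_natCast, ← zpow_mul, ← zpow_add]
  rw [mul_comm _ (s : ℤ), mul_comm _ (t : ℤ), hbezout, zpow_one]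

lemma card_ker_powMulPow [Finite G] (hst : s.Coprime t) :
    Nat.card (powMulPow (G := G) s t).ker = Nat.card G := by
  have h := (powMulPow (G := G) s t).ker.card_mul_index
  rw [Subgroup.index_ker, MonoidHom.range_eq_top_of_surjective _ (powMulPow_surjective hst),
    Subgroup.card_top, Nat.card_prod] at h
  exact Nat.eq_of_mul_eq_mul_right Nat.card_pos h

lemma card_fiber_powMulPow [Fintype G] [DecidableEq G] (hst : s.Coprime t) (g : G) :
    #{p | powMulPow s t p = g} = Nat.card G := by
  rw [MonoidHom.card_fiber_eq_of_mem_range _ (powMulPow_surjective hst g) ⟨1, map_one _⟩,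
    ← card_ker_powMulPow hst, ← Fintype.card_subtype, ← Nat.card_eq_fintype_card]
  rfl

lemma IsCyclic.card_filter_pow_eq_one [Fintype G] [DecidableEq G] [IsCyclic G] (t : ℕ) :
    #{y : G | y ^ t = 1} = (Fintype.card G).gcd t := by
  rw [← Fintype.card_subtype, ← Nat.card_eq_fintype_card, ← Nat.card_eq_fintype_card,
    ← IsCyclic.card_powMonoidHom_ker]
  rfl

end PowMulPow

section FiniteField

variable {F : Type} [Field F]

lemma fT_one_one_one (s t : ℕ) (d : F) (x y z : Fˣ) :
    fT s t 1 1 1 d (x, y, z) = (1 + x) + z * (1 + d * ((x ^ s * y ^ t : Fˣ) : F)) := by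
  simp only [fT, Units.val_mul, Units.val_pow_eq_pow_val]
  ring

lemma one_add_neg_neg_one_pow_mul_eq_zero_iff (s : ℕ) (u : Fˣ) :
    1 + -(-1) ^ s * (u : F) = 0 ↔ u = (-1) ^ s := by
  have hsq : ((-1 : F) ^ s) ^ 2 = 1 := by rw [← pow_mul, mul_comm, pow_mul, neg_one_sq, one_pow]
  rw [Units.ext_iff, Units.val_pow_eq_pow_val, Units.val_neg, Units.val_one]
  constructor <;> intro h
  · linear_combination -(-1 : F) ^ s * h - (u : F) * hsq
  · rw [h]
    linear_combination -hsq

variable [Fintype F]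

lemma Zf_eq_sum_card [DecidableEq F] (f : Fˣ × Fˣ × Fˣ → F) :
    Zf f = ∑ x, ∑ y, #{z | f (x, y, z) = 0} := by
  rw [Zf, Nat.card_eq_fintype_card, Fintype.card_subtype, card_filter]
  simp only [Fintype.sum_prod_type, card_filter]

lemma card_units_mul_eq_zero [DecidableEq F] (β : F) :
    #{z : Fˣ | (z : F) * β = 0} = if β = 0 then Fintype.card Fˣ else 0 := by
  split_ifs with hβ <;> simp [hβ]

lemma card_units_add_mul_eq_zero_of_ne_zero [DecidableEq F] {α : F} (hα : α ≠ 0) (β : F) :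
    #{z : Fˣ | α + z * β = 0} = if β = 0 then 0 else 1 := by
  split_ifs with hβ
  · simp [hβ, hα]
  · rw [card_eq_one]
    refine ⟨Units.mk0 (-α / β) (div_ne_zero (neg_ne_zero.2 hα) hβ), ?_⟩
    ext z
    simp only [mem_filter_univ, mem_singleton, Units.ext_iff, Units.val_mk0]
    rw [eq_div_iff hβ, add_eq_zero_iff_eq_neg']

lemma sum_card_units_add_mul_eq_zero [DecidableEq F] (α : F) (β : Fˣ → F) :
    ∑ y, (#{z : Fˣ | α + z * β y = 0} : ℤ) =
      if α = 0 then (Fintype.card Fˣ : ℤ) * #{y | β y = 0}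
      else (Fintype.card Fˣ : ℤ) - #{y | β y = 0} := by
  split_ifs with hα
  · simp only [hα, zero_add, card_units_mul_eq_zero]
    rw [card_filter, Nat.cast_sum, mul_sum]
    refine sum_congr rfl fun y _ => ?_
    split_ifs <;> simp
  · simp only [card_units_add_mul_eq_zero_of_ne_zero hα]
    have hsplit := card_filter_add_card_filter_not (s := (univ : Finset Fˣ)) (fun y => β y = 0)
    rw [card_univ] at hsplit
    rw [← hsplit, Nat.cast_add, add_sub_cancel_left, card_filter, Nat.cast_sum]
    refine sum_congr rfl fun y _ => ?_
    split_ifs <;> simp_all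

theorem Zf_fT_neg_neg_one_pow {s t : ℕ} (hst : s.Coprime t) :
    (Zf (fT s t 1 1 1 (-(-1) ^ s : F)) : ℤ) =
      Fintype.card F * Nat.gcd t (Fintype.card F - 1) +
        (Fintype.card F - 1 : ℤ) * (Fintype.card F - 3 : ℤ) := by
  classical
  set m : Fˣ → ℕ := fun x => #{y | powMulPow s t (x, y) = (-1) ^ s}
  have hinner (x : Fˣ) : ∑ y, (#{z : Fˣ | fT s t 1 1 1 (-(-1) ^ s) (x, y, z) = 0} : ℤ) =
      if x = -1 then (Fintype.card Fˣ : ℤ) * m x else (Fintype.card Fˣ : ℤ) - m x := by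
    have hx : 1 + (x : F) = 0 ↔ x = -1 := by
      rw [Units.ext_iff, Units.val_neg, Units.val_one, add_eq_zero_iff_eq_neg']
    simp only [fT_one_one_one, sum_card_units_add_mul_eq_zero,
      one_add_neg_neg_one_pow_mul_eq_zero_iff, hx, m, powMulPow_apply]
    congr! 4
  have hm_sum : ∑ x, m x = Fintype.card Fˣ := by
    rw [← Nat.card_eq_fintype_card, ← card_fiber_powMulPow hst ((-1) ^ s), card_filter,
      Fintype.sum_prod_type]
    simp only [m, card_filter]
  have hm_neg_one : m (-1) = (Fintype.card Fˣ).gcd t := by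
    simp only [m, powMulPow_apply, mul_eq_left]
    exact IsCyclic.card_filter_pow_eq_one t
  have hm_erase : ∑ x ∈ univ.erase (-1), (m x : ℤ) =
      Fintype.card Fˣ - (Fintype.card Fˣ).gcd t := by
    rw [sum_erase_eq_sub (mem_univ _), ← Nat.cast_sum, hm_sum, hm_neg_one]
  rw [Zf_eq_sum_card, Nat.cast_sum]
  simp only [Nat.cast_sum, hinner]
  rw [← add_sum_erase _ _ (mem_univ (-1 : Fˣ)), if_pos rfl, hm_neg_one,
    sum_congr rfl fun x hx => if_neg (ne_of_mem_erase hx), sum_sub_distrib, hm_erase, sum_const,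
    card_erase_of_mem (mem_univ _), card_univ, nsmul_eq_mul, Nat.cast_pred Fintype.card_pos,
    Fintype.card_eq_card_units_add_one (α := F), Nat.add_sub_cancel, Nat.gcd_comm t]
  push_cast
  ring

end FiniteField

theorem stmt3_general (F : Type) [Field F] [Fintype F] (s t : ℕ)
    (hq : 2 < Fintype.card F) (hst : Nat.gcd s t = 1) :
    ∃ a b c d : F, a ≠ 0 ∧ b ≠ 0 ∧ c ≠ 0 ∧ d ≠ 0 ∧
      Zf (fT s t a b c d) =
        Fintype.card F * Nat.gcd t (Fintype.card F - 1) +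
          (Fintype.card F - 1) * (Fintype.card F - 3) := by
  refine ⟨1, 1, 1, -(-1) ^ s, one_ne_zero, one_ne_zero, one_ne_zero, by simp, ?_⟩
  zify [(by omega : 1 ≤ Fintype.card F), (by omega : 3 ≤ Fintype.card F)]
  exact Zf_fT_neg_neg_one_pow hst

/-- There exist `a, b, c, d`, all nonzero, with
`Z(f) = q·gcd(t, q−1) + (q−1)(q−3)`. -/
theorem stmt3 (F : Type) [Field F] [Fintype F] (s t : ℕ)
    (hq : 2 < Fintype.card F) (ht : 1 ≤ t) (hst : Nat.gcd s t = 1) :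
    ∃ a b c d : F, a ≠ 0 ∧ b ≠ 0 ∧ c ≠ 0 ∧ d ≠ 0 ∧
      Zf (fT s t a b c d) =
        Fintype.card F * Nat.gcd t (Fintype.card F - 1) +
          (Fintype.card F - 1) * (Fintype.card F - 3) :=
  stmt3_general F s t hq hst
end

section
/- Let q > 2 be a prime power and let s₁, s₂, t be natural numbers with t ≥ 1, gcd(s₁,t) = 1 and gcd(s₂,t) = 1. If gcd(t, q−1) = 1, then the toric codes C_{T(s₁,t)} and C_{T(s₂,t)} over 𝔽_q are monomially equivalent. -/
/-- The toric code `C_{T(s,t)}`: all evaluation vectors of polynomials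
`a + b·x + c·z + d·x^s·y^t·z` on `(Fˣ)³`. -/
def toricCodeT (F : Type) [Field F] (s t : ℕ) : Set (Fˣ × Fˣ × Fˣ → F) :=
  {w | ∃ a b c d : F, w = fT s t a b c d}

/-- Monomial equivalence of two codes indexed by `(Fˣ)³`: there is a
permutation `π` of the index set and a nonzero scalar `lam v` for each index
`v` such that `C₂ = { v ↦ lam v * c (π v) : c ∈ C₁ }`. -/
def MonomiallyEquiv {F : Type} [Field F]
    (C₁ C₂ : Set (Fˣ × Fˣ × Fˣ → F)) : Prop :=
  ∃ (π : Equiv.Perm (Fˣ × Fˣ × Fˣ)) (lam : Fˣ × Fˣ × Fˣ → Fˣ),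
    C₂ = {w | ∃ c ∈ C₁, w = fun v => (lam v : F) * c (π v)}

/-- If `gcd(t, q−1) = 1`, then `C_{T(s₁,t)}` and `C_{T(s₂,t)}` are
monomially equivalent. -/
theorem stmt7 (F : Type) [Field F] [Fintype F] (s₁ s₂ t : ℕ)
    (hq : 2 < Fintype.card F) (ht : 1 ≤ t)
    (hst₁ : Nat.gcd s₁ t = 1) (hst₂ : Nat.gcd s₂ t = 1)
    (h : Nat.gcd t (Fintype.card F - 1) = 1) :
    MonomiallyEquiv (toricCodeT F s₁ t) (toricCodeT F s₂ t) := by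
  haveI := Classical.decEq F
  have hcard : Nat.Coprime (Nat.card Fˣ) t := by
    rw [Nat.card_eq_fintype_card, Fintype.card_units]
    exact Nat.Coprime.symm h
  set e : Fˣ ≃ Fˣ := powCoprime hcard with he
  set ρ : Fˣ → Fˣ := fun x => e.symm (x ^ s₂ * (x ^ s₁)⁻¹) with hρ
  have hkey : ∀ x : Fˣ, (ρ x) ^ t * x ^ s₁ = x ^ s₂ := by
    intro x
    have : (ρ x) ^ t = x ^ s₂ * (x ^ s₁)⁻¹ := e.apply_symm_apply _
    rw [this, inv_mul_cancel_right]
  refine ⟨{ toFun := fun v => (v.1, ρ v.1 * v.2.1, v.2.2),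
            invFun := fun v => (v.1, (ρ v.1)⁻¹ * v.2.1, v.2.2),
            left_inv := fun v => by simp,
            right_inv := fun v => by simp }, fun _ => 1, ?_⟩
  have hf : ∀ (a b c d : F) (v : Fˣ × Fˣ × Fˣ),
      fT s₁ t a b c d (v.1, ρ v.1 * v.2.1, v.2.2) = fT s₂ t a b c d v := by
    intro a b c d v
    have := hkey v.1
    have hF : ((ρ v.1 : F)) ^ t * (v.1 : F) ^ s₁ = (v.1 : F) ^ s₂ := by
      exact_mod_cast congrArg (Units.val) this
    simp only [fT, Units.val_mul, mul_pow]
    linear_combination (d * (v.2.2 : F) * (v.2.1 : F) ^ t) * hF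
  ext w
  constructor
  · rintro ⟨a, b, c, d, rfl⟩
    exact ⟨fT s₁ t a b c d, ⟨a, b, c, d, rfl⟩, by
      funext v; simp [Equiv.coe_fn_mk, one_mul, hf a b c d v]⟩
  · rintro ⟨c', ⟨a, b, c, d, rfl⟩, rfl⟩
    exact ⟨a, b, c, d, by funext v; simp [Equiv.coe_fn_mk, one_mul, hf a b c d v]⟩
end

section
/- Let s₁, s₂, t be integers with t ≥ 1 and t ∣ (s₁·s₂ − 1). Then there exist a 3×3 integer matrix M with determinant equal to 1 or −1 and a vector v ∈ ℤ³ such that the affine map x ↦ M·x + v maps the set {(0,0,0), (1,0,0), (0,0,1), (s₂,t,1)} ⊂ ℤ³ bijectively onto the set {(0,0,0), (1,0,0), (0,0,1), (s₁,t,1)}; that is, the empty tetrahedra T(s₂,t) and T(s₁,t) are lattice equivalent. -/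
/-!
Write `s₁ s₂ - 1 = t k`. The affine map `x ↦ M x + e₃` with
`M = !![s₁, -k, 0; t, -s₂, 0; 0, 0, -1]` has determinant `s₁ s₂ - t k = 1`, and it exchanges the
two edges of the tetrahedra: it sends `0 ↦ e₃`, `e₃ ↦ 0`, `e₁ ↦ (s₁, t, 1)` and
`(s₂, t, 1) ↦ e₁`, the last because `s₁ s₂ - k t = 1`.
-/

open Matrix

def emptyTetrahedronVertices (s t : ℤ) : Set (Fin 3 → ℤ) :=
  {![0, 0, 0], ![1, 0, 0], ![0, 0, 1], ![s, t, 1]}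

theorem Matrix.injective_mulVec_add {n R : Type*} [Fintype n] [DecidableEq n] [CommRing R]
    {M : Matrix n n R} (hM : IsUnit M.det) (v : n → R) :
    Function.Injective fun x => M *ᵥ x + v :=
  (add_left_injective v).comp (mulVec_injective_of_isUnit ((isUnit_iff_isUnit_det M).2 hM))

section

variable (s₁ s₂ t k : ℤ)

def tetrahedronEquivMatrix : Matrix (Fin 3) (Fin 3) ℤ :=
  !![s₁, -k, 0; t, -s₂, 0; 0, 0, -1]

theorem det_tetrahedronEquivMatrix : (tetrahedronEquivMatrix s₁ s₂ t k).det = s₁ * s₂ - t * k := by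
  simp only [tetrahedronEquivMatrix, det_fin_three, of_apply, cons_val', cons_val_zero,
    cons_val_one, cons_val_two, empty_val', cons_val_fin_one, head_cons, tail_cons, head_fin_const]
  ring

theorem tetrahedronEquivMatrix_mulVec_add (a b c : ℤ) :
    tetrahedronEquivMatrix s₁ s₂ t k *ᵥ ![a, b, c] + ![0, 0, 1] =
      ![s₁ * a - k * b, t * a - s₂ * b, 1 - c] := by
  ext i
  fin_cases i <;> simp [tetrahedronEquivMatrix] <;> ring

variable {s₁ s₂ t k}

theorem image_emptyTetrahedronVertices (hk : s₁ * s₂ - 1 = t * k) :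
    (fun x => tetrahedronEquivMatrix s₁ s₂ t k *ᵥ x + ![0, 0, 1]) ''
        emptyTetrahedronVertices s₂ t = emptyTetrahedronVertices s₁ t := by
  have hapex : ![s₁ * s₂ - k * t, t * s₂ - s₂ * t, 1 - 1] = ![1, 0, 0] := by
    ext i; fin_cases i <;> simp <;> linarith
  simp only [emptyTetrahedronVertices, Set.image_insert_eq, Set.image_singleton,
    tetrahedronEquivMatrix_mulVec_add, hapex]
  ext x
  simp only [Set.mem_insert_iff, Set.mem_singleton_iff, mul_one, mul_zero, sub_zero, sub_self]
  tauto

end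

theorem stmt9_general (s₁ s₂ t : ℤ) (h : t ∣ (s₁ * s₂ - 1)) :
    ∃ (M : Matrix (Fin 3) (Fin 3) ℤ) (v : Fin 3 → ℤ),
      (M.det = 1 ∨ M.det = -1) ∧
      Set.BijOn (fun x => M.mulVec x + v)
        ({![0,0,0], ![1,0,0], ![0,0,1], ![s₂,t,1]} : Set (Fin 3 → ℤ))
        ({![0,0,0], ![1,0,0], ![0,0,1], ![s₁,t,1]} : Set (Fin 3 → ℤ)) := by
  obtain ⟨k, hk⟩ := h
  have hdet : (tetrahedronEquivMatrix s₁ s₂ t k).det = 1 := by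
    rw [det_tetrahedronEquivMatrix]; linarith
  refine ⟨tetrahedronEquivMatrix s₁ s₂ t k, ![0, 0, 1], Or.inl hdet, ?_⟩
  have hbij := ((injective_mulVec_add (hdet ▸ isUnit_one) ![0, 0, 1]).injOn
    (s := emptyTetrahedronVertices s₂ t)).bijOn_image
  rwa [image_emptyTetrahedronVertices hk] at hbij

/-- If `t ∣ s₁·s₂ − 1` then the empty tetrahedra `T(s₂,t)` and `T(s₁,t)` are lattice equivalent via an affine unimodular transformation. -/
theorem stmt9 (s₁ s₂ t : ℤ) (ht : 1 ≤ t) (h : t ∣ (s₁ * s₂ - 1)) :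
    ∃ (M : Matrix (Fin 3) (Fin 3) ℤ) (v : Fin 3 → ℤ),
      (M.det = 1 ∨ M.det = -1) ∧
      Set.BijOn (fun x => M.mulVec x + v)
        ({![0,0,0], ![1,0,0], ![0,0,1], ![s₂,t,1]} : Set (Fin 3 → ℤ))
        ({![0,0,0], ![1,0,0], ![0,0,1], ![s₁,t,1]} : Set (Fin 3 → ℤ)) :=
  stmt9_general s₁ s₂ t h
end

section
/- Let s₁, s₂, t be integers with t ≥ 1 and t ∣ (s₁ + s₂). Then there exist a 3×3 integer matrix M with determinant equal to 1 or −1 and a vector v ∈ ℤ³ such that the affine map x ↦ M·x + v maps the set {(0,0,0), (1,0,0), (0,0,1), (s₂,t,1)} ⊂ ℤ³ bijectively onto the set {(0,0,0), (1,0,0), (0,0,1), (s₁,t,1)}; that is, the empty tetrahedra T(s₂,t) and T(s₁,t) are lattice equivalent. -/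
/-- If `t ∣ s₁ + s₂` then the empty tetrahedra `T(s₂,t)` and `T(s₁,t)` are lattice equivalent via an affine unimodular transformation. -/
theorem stmt10 (s₁ s₂ t : ℤ) (ht : 1 ≤ t) (h : t ∣ (s₁ + s₂)) :
    ∃ (M : Matrix (Fin 3) (Fin 3) ℤ) (v : Fin 3 → ℤ),
      (M.det = 1 ∨ M.det = -1) ∧
      Set.BijOn (fun x => M.mulVec x + v)
        ({![0,0,0], ![1,0,0], ![0,0,1], ![s₂,t,1]} : Set (Fin 3 → ℤ))
        ({![0,0,0], ![1,0,0], ![0,0,1], ![s₁,t,1]} : Set (Fin 3 → ℤ)) := by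
  obtain ⟨c, hc⟩ := h
  refine ⟨!![(-1 : ℤ), c, -1; 0, 1, 0; 0, 0, 1], ![1,0,0], Or.inr ?_, ?_⟩
  · simp [Matrix.det_fin_three, Matrix.vecHead, Matrix.vecTail]
  · set f : (Fin 3 → ℤ) → (Fin 3 → ℤ) :=
      fun x => (!![(-1 : ℤ), c, -1; 0, 1, 0; 0, 0, 1]).mulVec x + ![1,0,0] with hfdef
    have hf : ∀ x, f x = ![-(x 0) + c * x 1 - x 2 + 1, x 1, x 2] := by
      intro x; funext i; fin_cases i <;>
        simp [hfdef, Matrix.mulVec, dotProduct, Fin.sum_univ_three] <;> ring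
    have h0 : f ![0,0,0] = ![1,0,0] := by rw [hf]; funext i; fin_cases i <;> simp
    have h1 : f ![1,0,0] = ![0,0,0] := by rw [hf]; funext i; fin_cases i <;> simp
    have h2 : f ![0,0,1] = ![0,0,1] := by rw [hf]; funext i; fin_cases i <;> simp
    have h3 : f ![s₂,t,1] = ![s₁,t,1] := by
      rw [hf]; funext i; fin_cases i <;> simp <;> linarith [hc]
    have h3' : f ![s₁,t,1] = ![s₂,t,1] := by
      rw [hf]; funext i; fin_cases i <;> simp <;> linarith [hc]
    have hinv : ∀ x, f (f x) = x := by
      intro x; rw [hf, hf]; funext i; fin_cases i <;> simp <;> ring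
    have hm1 : Set.MapsTo f {![0,0,0], ![1,0,0], ![0,0,1], ![s₂,t,1]}
        {![0,0,0], ![1,0,0], ![0,0,1], ![s₁,t,1]} := by
      intro x hx
      simp only [Set.mem_insert_iff, Set.mem_singleton_iff] at hx ⊢
      rcases hx with rfl|rfl|rfl|rfl
      · exact Or.inr (Or.inl h0)
      · exact Or.inl h1
      · exact Or.inr (Or.inr (Or.inl h2))
      · exact Or.inr (Or.inr (Or.inr h3))
    have hm2 : Set.MapsTo f {![0,0,0], ![1,0,0], ![0,0,1], ![s₁,t,1]}
        {![0,0,0], ![1,0,0], ![0,0,1], ![s₂,t,1]} := by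
      intro x hx
      simp only [Set.mem_insert_iff, Set.mem_singleton_iff] at hx ⊢
      rcases hx with rfl|rfl|rfl|rfl
      · exact Or.inr (Or.inl h0)
      · exact Or.inl h1
      · exact Or.inr (Or.inr (Or.inl h2))
      · exact Or.inr (Or.inr (Or.inr h3'))
    exact Set.InvOn.bijOn ⟨fun x _ => hinv x, fun x _ => hinv x⟩ hm1 hm2
end

section
/- Let q > 2 be a prime power and let s, t be natural numbers with t ≥ 1 and gcd(s,t) = 1. Then the maximum of Z(f) over all Laurent polynomials f(x,y,z) = A + B·x + C·x^{-1} + D·z + E·x^s·y^t·z with (A,B,C,D,E) ≠ (0,0,0,0,0) equals 2(q−1)^2; equivalently, the minimum distance of the toric code C_{P^{(2,1)}(s,t)} over 𝔽_q is (q−1)^3 − 2(q−1)^2. -/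
/-- The Laurent polynomial `A + B·x + C·x⁻¹ + D·z + E·x^s·y^t·z` from the
signature-(2,1) polytope `P^{(2,1)}(s,t)`, evaluated on `(Fˣ)³`. -/
def fP21 {F : Type} [Field F] (s t : ℕ) (A B C D E : F)
    (v : Fˣ × Fˣ × Fˣ) : F :=
  A + B * (v.1 : F) + C * ((v.1⁻¹ : Fˣ) : F) + D * (v.2.2 : F) +
    E * (v.1 : F) ^ s * (v.2.1 : F) ^ t * (v.2.2 : F)

open Finset Polynomial

lemma card_filter_pow_mul_pow_eq {G : Type*} [CommGroup G] [Fintype G] [DecidableEq G]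
    {s t : ℕ} (hst : s.gcd t = 1) (c : G) :
    #{p : G × G | p.1 ^ s * p.2 ^ t = c} = Fintype.card G := by
  let φ : G × G →* G :=
    (powMonoidHom s).comp (MonoidHom.fst G G) * (powMonoidHom t).comp (MonoidHom.snd G G)
  have hφ : ∀ p, φ p = p.1 ^ s * p.2 ^ t := fun _ => rfl
  have hsurj : Function.Surjective φ := by
    intro c
    refine ⟨(c ^ s.gcdA t, c ^ s.gcdB t), ?_⟩
    rw [hφ, ← zpow_natCast, ← zpow_natCast, ← zpow_mul, ← zpow_mul, ← zpow_add, mul_comm,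
      mul_comm (s.gcdB t), ← Nat.gcd_eq_gcd_ab, hst, Nat.cast_one, zpow_one]
  have hfiber : ∀ c', #{p | φ p = c'} = #{p | φ p = c} := fun c' =>
    MonoidHom.card_fiber_eq_of_mem_range φ (hsurj c') (hsurj c)
  have hsum : Fintype.card G * Fintype.card G = Fintype.card G * #{p | φ p = c} := by
    rw [← Fintype.card_prod, ← card_univ, card_eq_sum_card_fiberwise (f := φ) (t := univ)
      (fun _ _ => mem_univ _), sum_congr rfl fun c' _ => hfiber c', sum_const, card_univ,
      smul_eq_mul]
  exact (Nat.eq_of_mul_eq_mul_left Fintype.card_pos hsum).symm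

section Field

variable {F : Type*} [Field F] [Fintype F] [DecidableEq F]

lemma card_filter_add_mul_eq_zero_le (a d : F) :
    #{z : Fˣ | a + d * z = 0} ≤ if d = 0 then Fintype.card Fˣ else 1 := by
  split_ifs with hd
  · exact card_filter_le _ _
  · refine card_le_one.2 fun z hz w hw => Units.ext (mul_left_cancel₀ hd ?_)
    simp only [mem_filter, mem_univ, true_and] at hz hw
    linear_combination hz - hw

lemma card_filter_add_mul_add_mul_inv_eq_zero_le_two {a b c : F}
    (h : ¬(a = 0 ∧ b = 0 ∧ c = 0)) :
    #{x : Fˣ | a + b * x + c * (x⁻¹ : Fˣ) = 0} ≤ 2 := by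
  set p : F[X] := C b * X ^ 2 + C a * X + C c
  have hp : p ≠ 0 := by
    intro h0
    apply h
    have h0 := congr_arg coeff h0
    refine ⟨?_, ?_, ?_⟩
    · simpa [p] using congr_fun h0 1
    · simpa [p] using congr_fun h0 2
    · simpa [p] using congr_fun h0 0
  have hroot : ∀ x ∈ ({x : Fˣ | a + b * x + c * (x⁻¹ : Fˣ) = 0} : Finset Fˣ),
      (x : F) ∈ p.roots.toFinset := by
    intro x hx
    simp only [mem_filter, mem_univ, true_and, Units.val_inv_eq_inv_val] at hx
    rw [Multiset.mem_toFinset, mem_roots hp, IsRoot, eval_add, eval_add, eval_mul, eval_mul,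
      eval_C, eval_C, eval_C, eval_pow, eval_X]
    field_simp at hx
    linear_combination hx
  calc #{x : Fˣ | a + b * x + c * (x⁻¹ : Fˣ) = 0}
      ≤ #p.roots.toFinset := card_le_card_of_injOn _ hroot fun x _ y _ => Units.ext
    _ ≤ p.natDegree := (Multiset.toFinset_card_le _).trans (card_roots' p)
    _ ≤ 2 := natDegree_quadratic_le

lemma card_filter_val_pow_mul_pow_eq_le {s t : ℕ} (hst : s.gcd t = 1) (c : F) :
    #{p : Fˣ × Fˣ | ((p.1 ^ s * p.2 ^ t : Fˣ) : F) = c} ≤ Fintype.card Fˣ := by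
  by_cases hc : c = 0
  · simp [hc]
  · rw [← card_filter_pow_mul_pow_eq hst (Units.mk0 c hc)]
    simp only [← Units.val_inj, Units.val_mk0, le_refl]

lemma card_filter_add_mul_pow_mul_pow_eq_zero_le {s t : ℕ} (hst : s.gcd t = 1) {D E : F}
    (hDE : ¬(D = 0 ∧ E = 0)) :
    #{p : Fˣ × Fˣ | D + E * p.1 ^ s * p.2 ^ t = 0} ≤ Fintype.card Fˣ := by
  by_cases hE : E = 0
  · have hD : D ≠ 0 := fun hD => hDE ⟨hD, hE⟩
    simp [hE, hD]
  · calc #{p : Fˣ × Fˣ | D + E * p.1 ^ s * p.2 ^ t = 0}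
        = #{p : Fˣ × Fˣ | ((p.1 ^ s * p.2 ^ t : Fˣ) : F) = -D / E} := by
          congr 1
          refine filter_congr fun p _ => ?_
          rw [eq_div_iff hE, Units.val_mul, Units.val_pow_eq_pow_val, Units.val_pow_eq_pow_val]
          constructor <;> intro h <;> linear_combination h
      _ ≤ Fintype.card Fˣ := card_filter_val_pow_mul_pow_eq_le hst _

end Field

section Zf

variable {F : Type} [Field F] [Fintype F] [DecidableEq F]

lemma Zf_eq_sum (f : Fˣ × Fˣ × Fˣ → F) :
    Zf f = ∑ p : Fˣ × Fˣ, #{z : Fˣ | f (p.1, p.2, z) = 0} := by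
  rw [Zf, Nat.card_eq_fintype_card, Fintype.card_subtype]
  simp only [card_filter, Fintype.sum_prod_type]

lemma Zf_comp_fst (g : Fˣ → F) :
    Zf (fun v => g v.1) = #{x | g x = 0} * Fintype.card Fˣ ^ 2 := by
  rw [Zf, Nat.card_congr (Equiv.prodSubtypeFstEquivSubtypeProd (p := (g · = 0))), Nat.card_prod,
    Nat.card_eq_fintype_card, Fintype.card_subtype, Nat.card_eq_fintype_card,
    Fintype.card_prod, sq]

lemma Zf_le_of_eq_add_mul (f : Fˣ × Fˣ × Fˣ → F) (a d : Fˣ × Fˣ → F)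
    (hf : ∀ x y z, f (x, y, z) = a (x, y) + d (x, y) * z) :
    Zf f ≤ Fintype.card Fˣ * #{p | d p = 0} + Fintype.card Fˣ ^ 2 := by
  calc Zf f = ∑ p : Fˣ × Fˣ, #{z : Fˣ | a p + d p * z = 0} := by
        simp only [Zf_eq_sum, hf]
    _ ≤ ∑ p : Fˣ × Fˣ, (if d p = 0 then Fintype.card Fˣ else 1) :=
        sum_le_sum fun p _ => card_filter_add_mul_eq_zero_le _ _
    _ ≤ ∑ p : Fˣ × Fˣ, ((if d p = 0 then Fintype.card Fˣ else 0) + 1) :=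
        sum_le_sum fun p _ => by split_ifs <;> simp
    _ = Fintype.card Fˣ * #{p | d p = 0} + Fintype.card Fˣ ^ 2 := by
        rw [sum_add_distrib, ← sum_filter, sum_const, sum_const, card_univ, Fintype.card_prod,
          smul_eq_mul, smul_eq_mul, mul_one, mul_comm, sq]

lemma Zf_fP21_of_eq_zero (s t : ℕ) (A B C : F) :
    Zf (fP21 s t A B C 0 0) =
      #{x : Fˣ | A + B * x + C * (x⁻¹ : Fˣ) = 0} * Fintype.card Fˣ ^ 2 := by
  rw [← Zf_comp_fst]
  congr 1
  funext v
  simp [fP21]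

lemma Zf_fP21_le {s t : ℕ} (hst : s.gcd t = 1) {A B C D E : F}
    (hne : (A, B, C, D, E) ≠ (0, 0, 0, 0, 0)) :
    Zf (fP21 s t A B C D E) ≤ 2 * Fintype.card Fˣ ^ 2 := by
  by_cases hDE : D = 0 ∧ E = 0
  · obtain ⟨rfl, rfl⟩ := hDE
    have hABC : ¬(A = 0 ∧ B = 0 ∧ C = 0) := by
      rintro ⟨rfl, rfl, rfl⟩
      exact hne rfl
    rw [Zf_fP21_of_eq_zero]
    exact Nat.mul_le_mul_right _ (card_filter_add_mul_add_mul_inv_eq_zero_le_two hABC)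
  · calc Zf (fP21 s t A B C D E)
        ≤ Fintype.card Fˣ * #{p : Fˣ × Fˣ | D + E * p.1 ^ s * p.2 ^ t = 0}
          + Fintype.card Fˣ ^ 2 :=
          Zf_le_of_eq_add_mul _ (fun p => A + B * p.1 + C * (p.1⁻¹ : Fˣ))
            (fun p => D + E * p.1 ^ s * p.2 ^ t) fun x y z => by simp only [fP21]; ring
      _ ≤ Fintype.card Fˣ * Fintype.card Fˣ + Fintype.card Fˣ ^ 2 := by
          gcongr
          exact card_filter_add_mul_pow_mul_pow_eq_zero_le hst hDE
      _ = 2 * Fintype.card Fˣ ^ 2 := by ring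

lemma Zf_fP21_eq_of_ne_one (s t : ℕ) {c : Fˣ} (hc : c ≠ 1) :
    Zf (fP21 s t (-(1 + c : F)) 1 c 0 0) = 2 * Fintype.card Fˣ ^ 2 := by
  have hroots : ({x : Fˣ | -(1 + c : F) + 1 * x + c * (x⁻¹ : Fˣ) = 0} : Finset Fˣ) = {1, c} := by
    ext x
    simp only [mem_filter, mem_univ, true_and, mem_insert, mem_singleton, Units.val_inv_eq_inv_val]
    have hx : (x : F) ≠ 0 := x.ne_zero
    rw [← Units.val_inj, ← Units.val_inj, Units.val_one, ← sub_eq_zero (a := (x : F)),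
      ← sub_eq_zero (a := (x : F)), ← mul_eq_zero]
    constructor <;> intro h
    · field_simp at h
      linear_combination h
    · field_simp
      linear_combination h
  rw [Zf_fP21_of_eq_zero, hroots, card_pair hc.symm]

end Zf

theorem stmt11_general (F : Type) [Field F] [Fintype F] (s t : ℕ)
    (hq : 2 < Fintype.card F) (hst : Nat.gcd s t = 1) :
    IsGreatest {n : ℕ | ∃ A B C D E : F, (A, B, C, D, E) ≠ (0, 0, 0, 0, 0) ∧
        n = Zf (fP21 s t A B C D E)}
      (2 * (Fintype.card F - 1) ^ 2) := by
  classical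
  rw [← Fintype.card_units]
  obtain ⟨c, hc⟩ : ∃ c : Fˣ, c ≠ 1 :=
    Fintype.exists_ne_of_one_lt_card (by rw [Fintype.card_units]; omega) 1
  refine ⟨⟨-(1 + c : F), 1, c, 0, 0, by simp, (Zf_fP21_eq_of_ne_one s t hc).symm⟩, ?_⟩
  rintro _ ⟨A, B, C, D, E, hne, rfl⟩
  exact Zf_fP21_le hst hne

/-- The maximum of `Z(f)` over nonzero
`f = A + B·x + C·x⁻¹ + D·z + E·x^s·y^t·z` equals `2(q−1)²`; equivalently the
minimum distance of `C_{P^{(2,1)}(s,t)}` is `(q−1)³ − 2(q−1)²`. -/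
theorem stmt11 (F : Type) [Field F] [Fintype F] (s t : ℕ)
    (hq : 2 < Fintype.card F) (ht : 1 ≤ t) (hst : Nat.gcd s t = 1) :
    IsGreatest {n : ℕ | ∃ A B C D E : F, (A, B, C, D, E) ≠ (0, 0, 0, 0, 0) ∧
        n = Zf (fP21 s t A B C D E)}
      (2 * (Fintype.card F - 1) ^ 2) :=
  stmt11_general F s t hq hst
end

section
/- Let q > 2 be a prime power. Then the maximum of Z(f) over all polynomials f(x,y,z) = A + B·x + C·y + D·x·y + E·z with (A,B,C,D,E) ≠ (0,0,0,0,0) equals 2q^2 − 5q + 3; equivalently, the minimum distance of the toric code C_{P^{(2,2)}} over 𝔽_q is (q−1)^3 − (2q^2 − 5q + 3). -/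
/-- The polynomial `A + B·x + C·y + D·x·y + E·z` from the signature-(2,2)
polytope `P^{(2,2)}`, evaluated on `(Fˣ)³`. -/
def fP22 {F : Type} [Field F] (A B C D E : F)
    (v : Fˣ × Fˣ × Fˣ) : F :=
  A + B * (v.1 : F) + C * (v.2.1 : F) + D * (v.1 : F) * (v.2.1 : F) +
    E * (v.2.2 : F)

section Aux

/-- arithmetic lemma 1 -/
lemma aux_arith1 (q : ℕ) (h : 3 ≤ q) :
    (q-1)*((q-1)*(q-1)) - (q-2)*((q-2)*(q-1)) = 2*q^2 - 5*q + 3 := by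
  have h1 : (1:ℕ) ≤ q := by omega
  have h2 : (2:ℕ) ≤ q := by omega
  have h3 : 5*q ≤ 2*q^2 := by nlinarith
  have h4 : (q-2)*((q-2)*(q-1)) ≤ (q-1)*((q-1)*(q-1)) := by
    apply Nat.mul_le_mul (by omega) (Nat.mul_le_mul (by omega) (by omega))
  zify [h1, h2, h3, h4]
  ring

/-- arithmetic lemma 2 -/
lemma aux_arith2 (q : ℕ) (h : 3 ≤ q) :
    (q-1)*(q-1) ≤ 2*q^2 - 5*q + 3 := by
  have h1 : (1:ℕ) ≤ q := by omega
  have h3 : 5*q ≤ 2*q^2 := by nlinarith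
  zify [h1, h3]
  nlinarith

/-- arithmetic lemma 3 -/
lemma aux_arith3 (q : ℕ) (h : 3 ≤ q) :
    (2*q-3)*(q-1) = 2*q^2 - 5*q + 3 := by
  have h1 : (1:ℕ) ≤ q := by omega
  have h2 : (3:ℕ) ≤ 2*q := by omega
  have h3 : 5*q ≤ 2*q^2 := by nlinarith
  zify [h1, h2, h3]
  ring

variable {F : Type} [Field F] [Fintype F]

/-- equivalence splitting off the last coordinate when the condition is
independent of it -/
def auxEquiv1 (P : Fˣ → Fˣ → Prop) :
    {v : Fˣ × Fˣ × Fˣ // P v.1 v.2.1} ≃ {p : Fˣ × Fˣ // P p.1 p.2} × Fˣ where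
  toFun v := (⟨(v.1.1, v.1.2.1), v.2⟩, v.1.2.2)
  invFun p := ⟨(p.1.1.1, p.1.1.2, p.2), p.1.2⟩
  left_inv := fun _ => rfl
  right_inv := fun _ => rfl

/-- equivalence to a sigma type -/
def auxEquiv2 (P : Fˣ → Fˣ → Prop) :
    {p : Fˣ × Fˣ // P p.1 p.2} ≃ Σ x : Fˣ, {y : Fˣ // P x y} where
  toFun p := ⟨p.1.1, p.1.2, p.2⟩
  invFun s := ⟨(s.1, s.2.1), s.2.2⟩
  left_inv := fun _ => rfl
  right_inv := fun _ => rfl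

/-- equivalence for the complement count in the membership part -/
def auxEquiv3 :
    {v : Fˣ × Fˣ × Fˣ // ¬(v.1 = 1 ∨ v.2.1 = 1)} ≃
      {x : Fˣ // ¬ x = 1} × {y : Fˣ // ¬ y = 1} × Fˣ where
  toFun v := (⟨v.1.1, fun h => v.2 (Or.inl h)⟩,
    ⟨v.1.2.1, fun h => v.2 (Or.inr h)⟩, v.1.2.2)
  invFun p := ⟨(p.1.1, p.2.1.1, p.2.2), fun h => h.elim p.1.2 p.2.1.2⟩
  left_inv := fun _ => rfl
  right_inv := fun _ => rfl

end Aux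

/-- The maximum of `Z(f)` over nonzero `f = A + B·x + C·y + D·x·y + E·z`
equals `2q² − 5q + 3`; equivalently the minimum distance of
`C_{P^{(2,2)}}` is `(q−1)³ − (2q² − 5q + 3)`. -/
theorem stmt12 (F : Type) [Field F] [Fintype F]
    (hq : 2 < Fintype.card F) :
    IsGreatest {n : ℕ | ∃ A B C D E : F, (A, B, C, D, E) ≠ (0, 0, 0, 0, 0) ∧
        n = Zf (fP22 A B C D E)}
      (2 * Fintype.card F ^ 2 - 5 * Fintype.card F + 3) := by
  classical
  set q := Fintype.card F with hqdef
  have hq3 : 3 ≤ q := hq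
  have hcu : Fintype.card Fˣ = q - 1 := by rw [Fintype.card_units]
  constructor
  · -- membership: f = 1 - x - y + xy = (1-x)(1-y)
    refine ⟨1, -1, -1, 1, 0, by simp, ?_⟩
    have hiff : ∀ v : Fˣ × Fˣ × Fˣ, fP22 (1:F) (-1) (-1) 1 0 v = 0 ↔
        (v.1 = 1 ∨ v.2.1 = 1) := by
      intro v
      have : fP22 (1:F) (-1) (-1) 1 0 v =
          (1 - (v.1:F)) * (1 - (v.2.1:F)) := by
        simp only [fP22]; ring
      rw [this, mul_eq_zero, sub_eq_zero, sub_eq_zero, eq_comm (a := (1:F)),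
        eq_comm (a := (1:F))]
      constructor
      · rintro (h | h)
        · exact Or.inl (Units.ext h)
        · exact Or.inr (Units.ext h)
      · rintro (h | h)
        · exact Or.inl (by rw [h]; rfl)
        · exact Or.inr (by rw [h]; rfl)
    have : Zf (fP22 (1:F) (-1) (-1) 1 0) =
        Nat.card {v : Fˣ × Fˣ × Fˣ // v.1 = 1 ∨ v.2.1 = 1} := by
      unfold Zf
      exact Nat.card_congr (Equiv.subtypeEquivRight hiff)
    rw [this]
    rw [Nat.card_eq_fintype_card]
    have hcompl : Fintype.card {v : Fˣ × Fˣ × Fˣ // ¬(v.1 = 1 ∨ v.2.1 = 1)} =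
        (q-2) * ((q-2) * (q-1)) := by
      rw [Fintype.card_congr auxEquiv3]
      rw [Fintype.card_prod, Fintype.card_prod]
      have hne1 : Fintype.card {x : Fˣ // ¬ x = 1} = q - 2 := by
        rw [Fintype.card_subtype_compl, Fintype.card_subtype_eq (1 : Fˣ), hcu]
        omega
      rw [hne1, hcu]
    have htotal := Fintype.card_subtype_compl (p := fun v : Fˣ × Fˣ × Fˣ =>
      v.1 = 1 ∨ v.2.1 = 1)
    rw [hcompl] at htotal
    have hprod : Fintype.card (Fˣ × Fˣ × Fˣ) = (q-1)*((q-1)*(q-1)) := by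
      rw [Fintype.card_prod, Fintype.card_prod, hcu]
    rw [hprod] at htotal
    have hle : Fintype.card {v : Fˣ × Fˣ × Fˣ // v.1 = 1 ∨ v.2.1 = 1} ≤
        (q-1)*((q-1)*(q-1)) := by
      rw [← hprod]; exact Fintype.card_subtype_le _
    rw [← aux_arith1 q hq3, htotal]
    exact Nat.sub_sub_self hle
  · rintro n ⟨A, B, C, D, E, hne, rfl⟩
    by_cases hE : E = 0
    · -- case E = 0
      subst hE
      have h4 : ¬(A = 0 ∧ B = 0 ∧ C = 0 ∧ D = 0) := by
        intro ⟨hA, hB, hC, hD⟩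
        exact hne (by rw [hA, hB, hC, hD])
      -- the zero condition depends only on x, y
      set P : Fˣ → Fˣ → Prop := fun x y =>
        A + B * (x:F) + C * (y:F) + D * (x:F) * (y:F) = 0 with hP
      have hfe : ∀ v : Fˣ × Fˣ × Fˣ, fP22 A B C D 0 v = 0 ↔ P v.1 v.2.1 := by
        intro v; simp [fP22, hP]
      have hZ : Zf (fP22 A B C D 0) =
          (∑ x : Fˣ, Fintype.card {y : Fˣ // P x y}) * (q - 1) := by
        unfold Zf
        rw [Nat.card_congr ((Equiv.subtypeEquivRight hfe).trans
          ((auxEquiv1 P).trans ((auxEquiv2 P).prodCongr (Equiv.refl Fˣ))))]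
        rw [Nat.card_eq_fintype_card, Fintype.card_prod, Fintype.card_sigma, hcu]
      rw [hZ]
      rw [← aux_arith3 q hq3]
      apply Nat.mul_le_mul_right
      -- bound the sum by 2q - 3
      have hny : ∀ x : Fˣ, Fintype.card {y : Fˣ // P x y} ≤ q - 1 := by
        intro x
        calc Fintype.card {y : Fˣ // P x y} ≤ Fintype.card Fˣ :=
          Fintype.card_subtype_le _
        _ = q - 1 := hcu
      have hn1 : ∀ x : Fˣ, ¬(A + B * (x:F) = 0 ∧ C + D * (x:F) = 0) →
          Fintype.card {y : Fˣ // P x y} ≤ 1 := by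
        intro x hx
        by_cases hCD : C + D * (x:F) = 0
        · -- then A + B x ≠ 0 and no solutions
          have hAB : A + B * (x:F) ≠ 0 := fun h => hx ⟨h, hCD⟩
          have : ∀ y : Fˣ, ¬ P x y := by
            intro y hy
            apply hAB
            have : A + B * (x:F) + (C + D * (x:F)) * (y:F) = 0 := by
              rw [hP] at hy; linear_combination hy
            rw [hCD] at this; simpa using this
          have : Fintype.card {y : Fˣ // P x y} = 0 := by
            rw [Fintype.card_eq_zero_iff]
            exact ⟨fun y => this y.1 y.2⟩
          omega
        · -- at most one solution y
          rw [Fintype.card_le_one_iff]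
          rintro ⟨y₁, hy₁⟩ ⟨y₂, hy₂⟩
          have h1 : (C + D * (x:F)) * (y₁:F) = (C + D * (x:F)) * (y₂:F) := by
            rw [hP] at hy₁ hy₂; linear_combination hy₁ - hy₂
          have : (y₁:F) = (y₂:F) := mul_left_cancel₀ hCD h1
          exact Subtype.ext (Units.ext this)
      -- the bad set has at most one element
      set Bad : Finset Fˣ :=
        Finset.univ.filter (fun x : Fˣ => A + B * (x:F) = 0 ∧ C + D * (x:F) = 0)
        with hBad
      have hBad1 : Bad.card ≤ 1 := by
        rw [Finset.card_le_one]
        intro a ha b hb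
        simp only [hBad, Finset.mem_filter] at ha hb
        by_contra hab
        have hne' : (a:F) - (b:F) ≠ 0 := by
          intro h
          exact hab (Units.ext (by linear_combination h))
        have hB : B = 0 := by
          have : B * ((a:F) - (b:F)) = 0 := by
            linear_combination ha.2.1 - hb.2.1
          rcases mul_eq_zero.mp this with h | h
          · exact h
          · exact absurd h hne'
        have hD : D = 0 := by
          have : D * ((a:F) - (b:F)) = 0 := by
            linear_combination ha.2.2 - hb.2.2
          rcases mul_eq_zero.mp this with h | h
          · exact h
          · exact absurd h hne'
        have hA : A = 0 := by have := ha.2.1; rw [hB] at this; simpa using this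
        have hC : C = 0 := by have := ha.2.2; rw [hD] at this; simpa using this
        exact h4 ⟨hA, hB, hC, hD⟩
      -- split the sum
      have hsplit := Finset.sum_filter_add_sum_filter_not Finset.univ
        (fun x : Fˣ => A + B * (x:F) = 0 ∧ C + D * (x:F) = 0)
        (fun x : Fˣ => Fintype.card {y : Fˣ // P x y})
      have hbadsum : ∑ x ∈ Bad, Fintype.card {y : Fˣ // P x y} ≤
          Bad.card * (q-1) := by
        calc ∑ x ∈ Bad, Fintype.card {y : Fˣ // P x y} ≤
            ∑ _x ∈ Bad, (q-1) := Finset.sum_le_sum (fun x _ => hny x)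
        _ = Bad.card * (q-1) := by rw [Finset.sum_const, smul_eq_mul]
      have hgoodsum : ∑ x ∈ Finset.univ.filter
          (fun x : Fˣ => ¬(A + B * (x:F) = 0 ∧ C + D * (x:F) = 0)),
          Fintype.card {y : Fˣ // P x y} ≤
          (Finset.univ.filter (fun x : Fˣ =>
            ¬(A + B * (x:F) = 0 ∧ C + D * (x:F) = 0))).card * 1 := by
        calc _ ≤ _ := Finset.sum_le_sum (fun x hx => hn1 x (by
          simpa using (Finset.mem_filter.mp hx).2))
        _ = _ := by rw [Finset.sum_const, smul_eq_mul]
      have hcards : Bad.card + (Finset.univ.filter (fun x : Fˣ =>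
          ¬(A + B * (x:F) = 0 ∧ C + D * (x:F) = 0))).card = q - 1 := by
        rw [hBad, Finset.card_filter_add_card_filter_not, Finset.card_univ,
          hcu]
      rw [← hsplit]
      rw [← hBad] at *
      interval_cases h : Bad.card <;> omega
    · -- case E ≠ 0: inject into Fˣ × Fˣ
      have hinj : Function.Injective
          (fun v : {v : Fˣ × Fˣ × Fˣ // fP22 A B C D E v = 0} =>
            (v.1.1, v.1.2.1)) := by
        rintro ⟨⟨x₁, y₁, z₁⟩, h₁⟩ ⟨⟨x₂, y₂, z₂⟩, h₂⟩ h
        simp only [Prod.mk.injEq] at h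
        obtain ⟨hx, hy⟩ := h
        subst hx; subst hy
        simp only [fP22] at h₁ h₂
        have : E * (z₁:F) = E * (z₂:F) := by linear_combination h₁ - h₂
        have : (z₁:F) = (z₂:F) := mul_left_cancel₀ hE this
        exact Subtype.ext (by simp [Units.ext this])
      calc Zf (fP22 A B C D E) ≤ Nat.card (Fˣ × Fˣ) :=
        Nat.card_le_card_of_injective _ hinj
      _ = (q-1)*(q-1) := by
          rw [Nat.card_eq_fintype_card, Fintype.card_prod, hcu]
      _ ≤ 2*q^2 - 5*q + 3 := aux_arith2 q hq3
end

section
/- Let q > 2 be a prime power and let s, t be natural numbers with 1 ≤ s ≤ t and gcd(s,t) = 1. For every polynomial f(x,y,z) = A + B·x + C·y + D·z + E·x^s·y^t·z with (A,B,C,D,E) ≠ (0,0,0,0,0), one has Z(f) ≤ (q−2)^2 + (s+t)·q; equivalently, the minimum distance of the toric code C_{P^{(3,2)}(s,t)} over 𝔽_q is at least (q−1)^3 − (q−2)^2 − (s+t)·q. -/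
/-- The polynomial `A + B·x + C·y + D·z + E·x^s·y^t·z` from the
signature-(3,2) polytope `P^{(3,2)}(s,t)`, evaluated on `(Fˣ)³`. -/
def fP32 {F : Type} [Field F] (s t : ℕ) (A B C D E : F)
    (v : Fˣ × Fˣ × Fˣ) : F :=
  A + B * (v.1 : F) + C * (v.2.1 : F) + D * (v.2.2 : F) +
    E * (v.1 : F) ^ s * (v.2.1 : F) ^ t * (v.2.2 : F)

/-!
Write `f = g + h·z` with `g = A + B·x + C·y` and `h = D + E·x^s·y^t`. Over a point `(x, y)`,
`f = 0` has one solution `z ∈ 𝔽_q^*` when `g, h ≠ 0`, none when exactly one of them vanishes and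
`q - 1` when both vanish, so `Z(f) + #{h = 0} + #{g = 0} = (q - 1)² + q·#{g = h = 0}`.
For `D, E ≠ 0` the curve `h = 0` has exactly `q - 1` points, since `(x, y) ↦ x^s·y^t` is a
surjective homomorphism when `gcd(s, t) = 1`; a line `g = 0` with `(B, C) ≠ 0` that meets the torus
has at least `q - 2` points; and eliminating `y` turns `g = h = 0` into a polynomial equation of
degree `s + t` in `x`. These give `Z(f) ≤ (q - 2)² + (s + t)·q`; in the degenerate cases
`Z(f) ≤ (q - 1)²`.
-/

open Finset

theorem card_pow_mul_pow_eq {G : Type*} [CommGroup G] [Fintype G] [DecidableEq G] {s t : ℕ}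
    (hst : s.Coprime t) (c : G) : #{p : G × G | p.1 ^ s * p.2 ^ t = c} = Fintype.card G := by
  let φ : G × G →* G :=
    (powMonoidHom s).comp (MonoidHom.fst G G) * (powMonoidHom t).comp (MonoidHom.snd G G)
  have hφ : Function.Surjective φ := fun g => by
    refine ⟨(g ^ Nat.gcdA s t, g ^ Nat.gcdB s t), ?_⟩
    have hbezout : (s : ℤ) * s.gcdA t + t * s.gcdB t = 1 := by
      exact_mod_cast (Nat.gcd_eq_gcd_ab s t).symm.trans (congrArg _ hst)
    simp only [φ, MonoidHom.mul_apply, MonoidHom.comp_apply, powMonoidHom_apply,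
      MonoidHom.coe_fst, MonoidHom.coe_snd, ← zpow_natCast, ← zpow_mul, ← zpow_add]
    rw [mul_comm (s.gcdA t), mul_comm (s.gcdB t), hbezout, zpow_one]
  have hfiber : ∀ c, #{p | φ p = c} = #{p | φ p = 1} := fun c =>
    MonoidHom.card_fiber_eq_of_mem_range φ (hφ c) (hφ 1)
  have hsum : Fintype.card (G × G) = Fintype.card G * #{p | φ p = 1} := by
    rw [← card_univ, card_eq_sum_card_fiberwise (f := φ) (t := univ) fun _ _ => mem_univ _]
    simp [hfiber]
  rw [Fintype.card_prod] at hsum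
  exact (hfiber c).trans (Nat.eq_of_mul_eq_mul_left Fintype.card_pos hsum).symm

variable {F : Type} [Field F] [Fintype F] [DecidableEq F]

theorem card_units_add_mul_eq_zero (a b : F) :
    #{z : Fˣ | a + b * z = 0} + (if b = 0 then 1 else 0) + (if a = 0 then 1 else 0) =
      1 + Fintype.card F * (if a = 0 ∧ b = 0 then 1 else 0) := by
  by_cases hb : b = 0 <;> by_cases ha : a = 0
  · have : 1 ≤ Fintype.card F := Fintype.card_pos
    simp only [ha, hb, zero_mul, add_zero, filter_true, card_univ, Fintype.card_units,
      ↓reduceIte, and_self, mul_one]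
    omega
  · simp [ha, hb]
  · simp [ha, hb]
  · have hz : #{z : Fˣ | a + b * z = 0} = 1 := by
      rw [card_eq_one]
      refine ⟨Units.mk0 (-a / b) (by simp [ha, hb]), ?_⟩
      ext z
      simp only [mem_filter, mem_univ, true_and, mem_singleton, Units.ext_iff, Units.val_mk0]
      constructor <;> intro h <;> field_simp at h ⊢ <;> linear_combination h
    simp [ha, hb, hz]

theorem card_add_mul_eq_zero {X : Type*} [Fintype X] (g h : X → F) :
    #{v : X × Fˣ | g v.1 + h v.1 * v.2 = 0} + #{p | h p = 0} + #{p | g p = 0} =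
      Fintype.card X + Fintype.card F * #{p | g p = 0 ∧ h p = 0} := calc
  _ = ∑ p, (#{z : Fˣ | g p + h p * z = 0} + (if h p = 0 then 1 else 0) +
        (if g p = 0 then 1 else 0)) := by
    simp only [sum_add_distrib, card_filter, Fintype.sum_prod_type]
  _ = ∑ p, (1 + Fintype.card F * if g p = 0 ∧ h p = 0 then 1 else 0) := by
    simp only [card_units_add_mul_eq_zero]
  _ = _ := by
    simp only [sum_add_distrib, ← mul_sum, ← card_filter, sum_const, card_univ, smul_eq_mul,
      mul_one]

theorem Zf_fP32_eq_card (s t : ℕ) (A B C D E : F) :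
    Zf (fP32 s t A B C D E) =
      #{v : (Fˣ × Fˣ) × Fˣ | A + B * v.1.1 + C * v.1.2 +
        (D + E * (v.1.1 : F) ^ s * (v.1.2 : F) ^ t) * v.2 = 0} := by
  rw [Zf, Nat.card_eq_fintype_card, Fintype.card_subtype (fP32 s t A B C D E · = 0)]
  refine card_equiv (Equiv.prodAssoc _ _ _).symm fun v => ?_
  rw [mem_filter_univ, mem_filter_univ, fP32, Equiv.prodAssoc_symm_apply]
  ring_nf

theorem Zf_fP32_add_card (s t : ℕ) (A B C D E : F) :
    Zf (fP32 s t A B C D E) + #{p : Fˣ × Fˣ | D + E * (p.1 : F) ^ s * (p.2 : F) ^ t = 0} +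
        #{p : Fˣ × Fˣ | A + B * p.1 + C * p.2 = 0} =
      (Fintype.card F - 1) ^ 2 + Fintype.card F *
        #{p : Fˣ × Fˣ | A + B * p.1 + C * p.2 = 0 ∧ D + E * (p.1 : F) ^ s * (p.2 : F) ^ t = 0} := by
  rw [Zf_fP32_eq_card, card_add_mul_eq_zero (fun p : Fˣ × Fˣ => A + B * p.1 + C * p.2)
    (fun p => D + E * (p.1 : F) ^ s * (p.2 : F) ^ t), Fintype.card_prod, Fintype.card_units, sq]

theorem card_binomial_eq {s t : ℕ} (hst : s.Coprime t) {d e : F} (hd : d ≠ 0) (he : e ≠ 0) :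
    #{p : Fˣ × Fˣ | d + e * (p.1 : F) ^ s * (p.2 : F) ^ t = 0} = Fintype.card F - 1 := by
  have hk : -d / e ≠ 0 := div_ne_zero (neg_ne_zero.mpr hd) he
  calc _ = #{p : Fˣ × Fˣ | p.1 ^ s * p.2 ^ t = Units.mk0 (-d / e) hk} := by
        refine congrArg card (filter_congr fun p _ => ?_)
        rw [Units.ext_iff, Units.val_mul, Units.val_pow_eq_pow_val, Units.val_pow_eq_pow_val,
          Units.val_mk0, eq_div_iff he]
        constructor <;> intro h <;> linear_combination h
    _ = Fintype.card F - 1 := by rw [card_pow_mul_pow_eq hst, Fintype.card_units]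

section Polynomial

open Polynomial

theorem card_units_roots_le {P : F[X]} (hP : P ≠ 0) :
    #{x : Fˣ | P.eval (x : F) = 0} ≤ P.natDegree := calc
  _ ≤ #P.roots.toFinset := card_le_card_of_injOn (↑) (fun x hx => by simpa [hP] using hx)
        Units.val_injective.injOn
  _ ≤ P.natDegree := (Multiset.toFinset_card_le _).trans (card_roots' P)

theorem card_units_linear_roots_le {a b : F} (h : ¬(a = 0 ∧ b = 0)) :
    #{x : Fˣ | a + b * x = 0} ≤ 1 := by
  have hP : C b * X + C a ≠ 0 := by
    contrapose! h
    simpa using And.intro (congrArg (coeff · 0) h) (congrArg (coeff · 1) h)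
  calc #{x : Fˣ | a + b * x = 0} = #{x : Fˣ | (C b * X + C a : F[X]).eval (x : F) = 0} := by
        simp [add_comm]
    _ ≤ 1 := (card_units_roots_le hP).trans natDegree_linear_le

theorem card_line_inter_binomial_le_of_ne {s t : ℕ} (hs : s ≠ 0) {a b c d e : F} (hc : c ≠ 0)
    (hd : d ≠ 0) :
    #{p : Fˣ × Fˣ | a + b * p.1 + c * p.2 = 0 ∧ d + e * (p.1 : F) ^ s * (p.2 : F) ^ t = 0} ≤
      s + t := by
  -- substituting `c·y = -(a + b·x)` into `(-c)^t·(d + e·x^s·y^t)`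
  set P : F[X] := C (d * (-c) ^ t) + C e * X ^ s * (C a + C b * X) ^ t
  have hP : P ≠ 0 := fun h => by
    simpa [P, hs, hc, hd] using congrArg (eval 0) h
  have hdeg : P.natDegree ≤ s + t := by
    unfold P
    compute_degree
  refine le_trans (card_le_card_of_injOn Prod.fst (fun p hp => ?_) fun p hp p' hp' hpp' => ?_)
    ((card_units_roots_le hP).trans hdeg)
  · simp only [mem_coe, mem_filter_univ] at hp ⊢
    have hline : (a + b * p.1) ^ t = (-c) ^ t * (p.2 : F) ^ t := by
      rw [← mul_pow]
      congr 1
      linear_combination hp.1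
    simp only [P, eval_add, eval_mul, eval_C, eval_pow, eval_X]
    linear_combination e * (p.1 : F) ^ s * hline + (-c) ^ t * hp.2
  · simp only [mem_coe, mem_filter_univ] at hp hp'
    have hy : c * p.2 = c * p'.2 := by
      linear_combination hp.1 - hp'.1 - b * congrArg Units.val hpp'
    exact Prod.ext hpp' (Units.ext (mul_left_cancel₀ hc hy))

end Polynomial

theorem card_line_inter_binomial_le {s t : ℕ} (hs : s ≠ 0) (ht : t ≠ 0) {a b c d e : F}
    (hbc : ¬(b = 0 ∧ c = 0)) (hd : d ≠ 0) :
    #{p : Fˣ × Fˣ | a + b * p.1 + c * p.2 = 0 ∧ d + e * (p.1 : F) ^ s * (p.2 : F) ^ t = 0} ≤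
      s + t := by
  by_cases hc : c = 0
  · have hb : b ≠ 0 := fun hb => hbc ⟨hb, hc⟩
    calc _ = #{p : Fˣ × Fˣ | a + c * p.1 + b * p.2 = 0 ∧
            d + e * (p.1 : F) ^ t * (p.2 : F) ^ s = 0} :=
          card_equiv (Equiv.prodComm _ _) fun p => by
            simp only [mem_filter_univ, Equiv.prodComm_apply, Prod.fst_swap, Prod.snd_swap]
            ring_nf
      _ ≤ t + s := card_line_inter_binomial_le_of_ne ht hb hd
      _ = s + t := add_comm t s
  · exact card_line_inter_binomial_le_of_ne hs hc hd

theorem card_line_comm (a b c : F) :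
    #{p : Fˣ × Fˣ | a + b * p.1 + c * p.2 = 0} = #{p : Fˣ × Fˣ | a + c * p.1 + b * p.2 = 0} :=
  card_equiv (Equiv.prodComm _ _) fun p => by
    simp only [mem_filter_univ, Equiv.prodComm_apply, Prod.fst_swap, Prod.snd_swap]
    ring_nf

theorem card_line_eq {a b c : F} (hc : c ≠ 0) :
    #{p : Fˣ × Fˣ | a + b * p.1 + c * p.2 = 0} = #{x : Fˣ | a + b * x ≠ 0} := by
  refine card_bij (fun p _ => p.1) (fun p hp => ?_) (fun p hp p' hp' hpp' => ?_) fun x hx => ?_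
  · rw [mem_filter_univ] at hp ⊢
    intro hx
    simp [hx, hc] at hp
  · rw [mem_filter_univ] at hp hp'
    have hy : c * p.2 = c * p'.2 := by
      linear_combination hp - hp' - b * congrArg Units.val hpp'
    exact Prod.ext hpp' (Units.ext (mul_left_cancel₀ hc hy))
  · rw [mem_filter_univ] at hx
    refine ⟨(x, Units.mk0 (-(a + b * x) / c) (div_ne_zero (neg_ne_zero.mpr hx) hc)), ?_, rfl⟩
    rw [mem_filter_univ, Units.val_mk0]
    field_simp
    ring

theorem card_line_le {a b c : F} (h : ¬(a = 0 ∧ b = 0 ∧ c = 0)) :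
    #{p : Fˣ × Fˣ | a + b * p.1 + c * p.2 = 0} ≤ Fintype.card F - 1 := by
  rw [← Fintype.card_units]
  by_cases hc : c = 0
  · by_cases hb : b = 0
    · have ha : a ≠ 0 := fun ha => h ⟨ha, hb, hc⟩
      simp [ha, hb, hc]
    · rw [card_line_comm, card_line_eq hb]
      exact card_filter_le _ _
  · rw [card_line_eq hc]
    exact card_filter_le _ _

theorem le_card_line_of_ne {a b c : F} (hab : ¬(a = 0 ∧ b = 0)) (hc : c ≠ 0) :
    Fintype.card F - 2 ≤ #{p : Fˣ × Fˣ | a + b * p.1 + c * p.2 = 0} := by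
  have hsplit := card_filter_add_card_filter_not (s := univ) (fun x : Fˣ => a + b * x = 0)
  simp only [← ne_eq, card_univ, Fintype.card_units] at hsplit
  have := card_units_linear_roots_le hab
  rw [card_line_eq hc]
  omega

theorem le_card_line {a b c : F} (hbc : ¬(b = 0 ∧ c = 0))
    (hne : ∃ p : Fˣ × Fˣ, a + b * p.1 + c * p.2 = 0) :
    Fintype.card F - 2 ≤ #{p : Fˣ × Fˣ | a + b * p.1 + c * p.2 = 0} := by
  obtain ⟨p, hp⟩ := hne
  by_cases hc : c = 0
  · have hb : b ≠ 0 := fun hb => hbc ⟨hb, hc⟩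
    have ha : ¬(a = 0 ∧ c = 0) := fun ⟨ha, _⟩ => by simp [ha, hb, hc] at hp
    exact card_line_comm a b c ▸ le_card_line_of_ne ha hb
  · have hab : ¬(a = 0 ∧ b = 0) := fun ⟨ha, hb⟩ => by simp [ha, hb, hc] at hp
    exact le_card_line_of_ne hab hc

theorem stmt14_general (F : Type) [Field F] [Fintype F] (s t : ℕ)
    (hs : 1 ≤ s) (hst' : s ≤ t)
    (hst : Nat.gcd s t = 1)
    (A B C D E : F) (hne : (A, B, C, D, E) ≠ (0, 0, 0, 0, 0)) :
    Zf (fP32 s t A B C D E) ≤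
      (Fintype.card F - 2) ^ 2 + (s + t) * Fintype.card F := by
  classical
  obtain ⟨n, hn⟩ : ∃ n, Fintype.card F = n + 2 :=
    ⟨_, (Nat.sub_add_cancel Fintype.one_lt_card).symm⟩
  have hcount := Zf_fP32_add_card s t A B C D E
  simp only [hn, Nat.add_sub_cancel, Nat.add_succ_sub_one] at hcount ⊢
  set T := #{p : Fˣ × Fˣ | D + E * (p.1 : F) ^ s * (p.2 : F) ^ t = 0}
  set G := #{p : Fˣ × Fˣ | A + B * p.1 + C * p.2 = 0}
  set I := #{p : Fˣ × Fˣ | A + B * p.1 + C * p.2 = 0 ∧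
    D + E * (p.1 : F) ^ s * (p.2 : F) ^ t = 0}
  have hsq : (n + 1) ^ 2 ≤ n ^ 2 + (s + t) * (n + 2) := by nlinarith
  rcases Nat.eq_zero_or_pos I with hI_zero | hI_pos
  · rw [hI_zero] at hcount
    linarith
  obtain ⟨p, hp⟩ := card_pos.1 hI_pos
  rw [mem_filter_univ] at hp
  by_cases hDE : D = 0 ∧ E = 0
  · have hT : T = (n + 1) ^ 2 := by simp [T, hDE, hn, sq, Fintype.card_units]
    have hIG : I = G := by simp [I, G, hDE]
    have hG : G ≤ n + 1 := by
      simpa [hn] using card_line_le (a := A) (b := B) (c := C) (by simpa [hDE] using hne)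
    nlinarith
  have hD : D ≠ 0 := fun hD => hDE ⟨hD, by simpa [hD] using hp.2⟩
  have hE : E ≠ 0 := fun hE => hDE ⟨by simpa [hE] using hp.2, hE⟩
  have hT : T = n + 1 := by simpa [hn] using card_binomial_eq hst hD hE
  by_cases hBC : B = 0 ∧ C = 0
  · have hA : A = 0 := by simpa [hBC] using hp.1
    have hG : G = (n + 1) ^ 2 := by simp [G, hA, hBC, hn, sq, Fintype.card_units]
    have hIT : I = T := by simp [I, T, hA, hBC]
    nlinarith
  have hG : n ≤ G := by simpa [hn] using le_card_line hBC ⟨p, hp.1⟩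
  have hI : I ≤ s + t := card_line_inter_binomial_le (by omega) (by omega) hBC hD
  nlinarith [Nat.mul_le_mul_left (n + 2) hI]

/-- Every nonzero `f = A + B·x + C·y + D·z + E·x^s·y^t·z` has
`Z(f) ≤ (q−2)² + (s+t)·q`; equivalently the minimum distance of
`C_{P^{(3,2)}(s,t)}` is at least `(q−1)³ − (q−2)² − (s+t)·q`. -/
theorem stmt14 (F : Type) [Field F] [Fintype F] (s t : ℕ)
    (hq : 2 < Fintype.card F) (hs : 1 ≤ s) (hst' : s ≤ t)
    (hst : Nat.gcd s t = 1)
    (A B C D E : F) (hne : (A, B, C, D, E) ≠ (0, 0, 0, 0, 0)) :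
    Zf (fP32 s t A B C D E) ≤
      (Fintype.card F - 2) ^ 2 + (s + t) * Fintype.card F :=
  stmt14_general F s t hs hst' hst A B C D E hne
end

section
/- Let q > 2 be a prime power and let s, t be natural numbers with 1 ≤ s ≤ t and gcd(s,t) = 1. Then there exists a polynomial f(x,y,z) = A + B·x + C·y + D·z + E·x^s·y^t·z with (A,B,C,D,E) ≠ (0,0,0,0,0) such that Z(f) ≥ (q−1)(q−3) + q·gcd(s+t, q−1); equivalently, the minimum distance of the toric code C_{P^{(3,2)}(s,t)} over 𝔽_q is at most (q−1)^3 − (q−1)(q−3) − q·gcd(s+t, q−1). -/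
/-- In a finite cyclic group, the number of solutions of `x ^ n = 1` is
`gcd n (card G)`. -/
lemma card_pow_eq_one_eq_gcd (G : Type) [Group G] [Fintype G] [IsCyclic G]
    (n : ℕ) (hn : 0 < n) :
    Nat.card {x : G // x ^ n = 1} = Nat.gcd n (Fintype.card G) := by
  classical
  set m := Fintype.card G with hm
  set d := Nat.gcd n m with hd
  have hdm : d ∣ m := Nat.gcd_dvd_right _ _
  have hdn : d ∣ n := Nat.gcd_dvd_left _ _
  have hm0 : 0 < m := Fintype.card_pos
  have hd0 : 0 < d := Nat.gcd_pos_of_pos_left _ hn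
  have hiff : ∀ x : G, x ^ n = 1 ↔ x ^ d = 1 := by
    intro x
    constructor
    · intro h
      exact orderOf_dvd_iff_pow_eq_one.mp
        (Nat.dvd_gcd (orderOf_dvd_of_pow_eq_one h) orderOf_dvd_card)
    · intro h
      obtain ⟨k, hk⟩ := hdn
      rw [hk, pow_mul, h, one_pow]
  have hcongr : Nat.card {x : G // x ^ n = 1} = Nat.card {x : G // x ^ d = 1} :=
    Nat.card_congr (Equiv.subtypeEquivRight hiff)
  rw [hcongr]
  apply le_antisymm
  · rw [Nat.card_eq_fintype_card, Fintype.card_subtype]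
    exact IsCyclic.card_pow_eq_one_le hd0
  · obtain ⟨g, hg⟩ := IsCyclic.exists_generator (α := G)
    have horder : orderOf g = m := by
      rw [orderOf_eq_card_of_forall_mem_zpowers hg, Nat.card_eq_fintype_card]
    set ζ := g ^ (m / d) with hζdef
    have hmd : m / d ∣ m := ⟨d, (Nat.div_mul_cancel hdm).symm⟩
    have hζord : orderOf ζ = d := by
      rw [hζdef, orderOf_pow, horder, Nat.gcd_eq_right hmd,
        Nat.div_div_self hdm hm0.ne']
    have hζd : ζ ^ d = 1 := by rw [← hζord]; exact pow_orderOf_eq_one ζ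
    have hinj : Function.Injective
        (fun x : Subgroup.zpowers ζ => (⟨x.1, by
          obtain ⟨k, hk⟩ := Subgroup.mem_zpowers_iff.mp x.2
          rw [← hk, ← zpow_natCast, ← zpow_mul, mul_comm, zpow_mul,
            zpow_natCast, hζd, one_zpow]⟩ : {x : G // x ^ d = 1})) := by
      intro a b hab
      have h2 := congrArg (fun y : {x : G // x ^ d = 1} => y.1) hab
      exact Subtype.ext h2
    have := Nat.card_le_card_of_injective _ hinj
    rwa [Nat.card_zpowers, hζord] at this

/-- Inclusion–exclusion for subtype cardinalities. -/
lemma card_not_and_not {α : Type} [Fintype α] (P Q : α → Prop) :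
    Nat.card {a : α // ¬P a ∧ ¬Q a} + Nat.card {a : α // P a} +
      Nat.card {a : α // Q a} =
    Fintype.card α + Nat.card {a : α // P a ∧ Q a} := by
  classical
  simp_rw [Nat.card_eq_fintype_card, Fintype.card_subtype]
  set sP := Finset.univ.filter P with hsP
  set sQ := Finset.univ.filter Q with hsQ
  have h1 : Finset.univ.filter (fun a => ¬P a ∧ ¬Q a) = (sP ∪ sQ)ᶜ := by
    ext a
    simp [hsP, hsQ, not_or]
  have h2 : Finset.univ.filter (fun a => P a ∧ Q a) = sP ∩ sQ := by
    ext a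
    simp [hsP, hsQ]
  rw [h1, h2]
  have h3 := Finset.card_union_add_card_inter sP sQ
  have h4 := Finset.card_compl_add_card (sP ∪ sQ)
  omega

/-- The number of solutions of `x^s y^t = 1` in `(Fˣ)²` when `gcd s t = 1`. -/
lemma card_ker_pow {F : Type} [Field F] [Fintype F] (s t : ℕ)
    (hst : Nat.gcd s t = 1) :
    Nat.card {p : Fˣ × Fˣ // p.1 ^ s * p.2 ^ t = 1} = Nat.card Fˣ := by
  classical
  set φ : Fˣ × Fˣ →* Fˣ :=
    { toFun := fun p => p.1 ^ s * p.2 ^ t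
      map_one' := by
        show (1 : Fˣ) ^ s * (1 : Fˣ) ^ t = 1
        rw [one_pow, one_pow, one_mul]
      map_mul' := by
        intro a b
        show (a.1 * b.1) ^ s * (a.2 * b.2) ^ t = _
        rw [mul_pow, mul_pow]
        exact mul_mul_mul_comm _ _ _ _ } with hφ
  have hbezout : (s : ℤ) * Nat.gcdA s t + (t : ℤ) * Nat.gcdB s t = 1 := by
    have h := Nat.gcd_eq_gcd_ab s t
    rw [hst] at h
    exact_mod_cast h.symm
  have hsurj : Function.Surjective φ := by
    intro w
    refine ⟨(w ^ Nat.gcdA s t, w ^ Nat.gcdB s t), ?_⟩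
    show (w ^ Nat.gcdA s t) ^ s * (w ^ Nat.gcdB s t) ^ t = w
    rw [← zpow_natCast (w ^ Nat.gcdA s t) s, ← zpow_natCast (w ^ Nat.gcdB s t) t,
      ← zpow_mul, ← zpow_mul, ← zpow_add, mul_comm (Nat.gcdA s t),
      mul_comm (Nat.gcdB s t), hbezout, zpow_one]
  have hker : Nat.card {p : Fˣ × Fˣ // p.1 ^ s * p.2 ^ t = 1}
      = Nat.card φ.ker := by
    apply Nat.card_congr
    exact Equiv.subtypeEquivRight (fun p => by
      rw [MonoidHom.mem_ker]; rfl)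
  have hquot : Nat.card ((Fˣ × Fˣ) ⧸ φ.ker) = Nat.card Fˣ :=
    Nat.card_congr (QuotientGroup.quotientKerEquivOfSurjective φ hsurj).toEquiv
  have htotal := Subgroup.card_eq_card_quotient_mul_card_subgroup φ.ker
  rw [hquot] at htotal
  have hcard2 : Nat.card (Fˣ × Fˣ) = Nat.card Fˣ * Nat.card Fˣ := by
    rw [Nat.card_prod]
  rw [hcard2] at htotal
  have hpos : 0 < Nat.card Fˣ := Nat.card_pos
  rw [hker]
  exact (Nat.eq_of_mul_eq_mul_left hpos htotal).symm

/-- There is a nonzero `f = A + B·x + C·y + D·z + E·x^s·y^t·z` with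
`Z(f) ≥ (q−1)(q−3) + q·gcd(s+t, q−1)`; equivalently the minimum distance of
`C_{P^{(3,2)}(s,t)}` is at most `(q−1)³ − (q−1)(q−3) − q·gcd(s+t, q−1)`. -/
theorem stmt15 (F : Type) [Field F] [Fintype F] (s t : ℕ)
    (hq : 2 < Fintype.card F) (hs : 1 ≤ s) (hst' : s ≤ t)
    (hst : Nat.gcd s t = 1) :
    ∃ A B C D E : F, (A, B, C, D, E) ≠ (0, 0, 0, 0, 0) ∧
      (Fintype.card F - 1) * (Fintype.card F - 3) +
        Fintype.card F * Nat.gcd (s + t) (Fintype.card F - 1) ≤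
      Zf (fP32 s t A B C D E) := by
  classical
  refine ⟨0, 1, -1, -1, 1, ?_, ?_⟩
  · simp
  set q := Fintype.card F with hq'
  have hmq : Fintype.card Fˣ = q - 1 := Fintype.card_units F
  set m := Fintype.card Fˣ with hm'
  set g := Nat.gcd (s + t) m with hg'
  have hgoalgcd : Nat.gcd (s + t) (q - 1) = g := by rw [hg', hmq]
  -- source types
  set W₁ := ({x : Fˣ // x ^ (s + t) = 1} × Fˣ) with hW₁
  set W₂ := {p : Fˣ × Fˣ // ¬p.1 = p.2 ∧ ¬p.1 ^ s * p.2 ^ t = 1} with hW₂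
  -- the injection into the zero set
  set f := fP32 s t (0 : F) 1 (-1) (-1) 1 with hf
  have hfval : ∀ v : Fˣ × Fˣ × Fˣ, f v =
      (v.1 : F) - (v.2.1 : F) + ((v.1 : F) ^ s * (v.2.1 : F) ^ t - 1) * (v.2.2 : F) := by
    intro v
    simp only [hf, fP32]
    ring
  have hψ₁ : ∀ w : W₁, f (w.1.1, w.1.1, w.2) = 0 := by
    rintro ⟨⟨x, hx⟩, z⟩
    have hx' : (x : F) ^ s * (x : F) ^ t = 1 := by
      have : ((x ^ (s + t) : Fˣ) : F) = 1 := by rw [hx]; rfl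
      rw [Units.val_pow_eq_pow_val, pow_add] at this
      exact this
    rw [hfval]
    simp only
    rw [hx']
    ring
  have hψ₂den : ∀ w : W₂, ((w.1.1 : F) ^ s * (w.1.2 : F) ^ t - 1) ≠ 0 := by
    rintro ⟨⟨x, y⟩, hne, hne1⟩
    intro h
    apply hne1
    have : ((x ^ s * y ^ t : Fˣ) : F) = 1 := by
      rw [Units.val_mul, Units.val_pow_eq_pow_val, Units.val_pow_eq_pow_val]
      exact sub_eq_zero.mp h
    exact Units.ext this
  have hψ₂num : ∀ w : W₂, ((w.1.2 : F) - (w.1.1 : F)) ≠ 0 := by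
    rintro ⟨⟨x, y⟩, hne, hne1⟩
    intro h
    apply hne
    apply Units.ext
    exact (sub_eq_zero.mp h).symm
  set ψ : W₁ ⊕ W₂ → {v : Fˣ × Fˣ × Fˣ // f v = 0} :=
    fun w => match w with
    | Sum.inl w₁ => ⟨(w₁.1.1, w₁.1.1, w₁.2), hψ₁ w₁⟩
    | Sum.inr w₂ => ⟨(w₂.1.1, w₂.1.2,
        Units.mk0 (((w₂.1.2 : F) - (w₂.1.1 : F)) /
          ((w₂.1.1 : F) ^ s * (w₂.1.2 : F) ^ t - 1))
          (div_ne_zero (hψ₂num w₂) (hψ₂den w₂))), by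
        rw [hfval]
        simp only [Units.val_mk0]
        rw [mul_div_cancel₀ _ (hψ₂den w₂)]
        ring⟩ with hψdef
  have hψinj : Function.Injective ψ := by
    rintro (⟨⟨x, hx⟩, z⟩ | ⟨⟨x, y⟩, hxy⟩) (⟨⟨x', hx'⟩, z'⟩ | ⟨⟨x', y'⟩, hxy'⟩) h <;>
      simp only [hψdef, Subtype.mk.injEq, Prod.mk.injEq] at h
    · obtain ⟨h1, h2, h3⟩ := h
      exact congrArg Sum.inl (Prod.ext (Subtype.ext h1) h3)
    · exact absurd (h.1.symm.trans h.2.1) hxy'.1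
    · exact absurd (h.1.trans h.2.1.symm) hxy.1
    · obtain ⟨h1, h2, h3⟩ := h
      exact congrArg Sum.inr (Subtype.ext (Prod.ext h1 h2))
  have hZ : Nat.card (W₁ ⊕ W₂) ≤ Zf f := by
    rw [Zf]
    exact Nat.card_le_card_of_injective ψ hψinj
  -- compute the cardinalities
  have hc1 : Nat.card W₁ = g * m := by
    rw [hW₁, Nat.card_prod, card_pow_eq_one_eq_gcd Fˣ (s + t) (by omega),
      Nat.card_eq_fintype_card]
  have hPQ : Nat.card {p : Fˣ × Fˣ // p.1 = p.2 ∧ p.1 ^ s * p.2 ^ t = 1} = g := by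
    have he : {x : Fˣ // x ^ (s + t) = 1} ≃
        {p : Fˣ × Fˣ // p.1 = p.2 ∧ p.1 ^ s * p.2 ^ t = 1} :=
      { toFun := fun x => ⟨(x.1, x.1), rfl, by rw [← pow_add]; exact x.2⟩
        invFun := fun p => ⟨p.1.1, by
          obtain ⟨h1, h2⟩ := p.2
          rw [pow_add]
          rw [← h1] at h2
          exact h2⟩
        left_inv := fun x => Subtype.ext rfl
        right_inv := fun p => Subtype.ext (by
          obtain ⟨h1, h2⟩ := p.2
          exact Prod.ext rfl h1) }
    rw [← Nat.card_congr he, card_pow_eq_one_eq_gcd Fˣ (s + t) (by omega)]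
  have hP : Nat.card {p : Fˣ × Fˣ // p.1 = p.2} = m := by
    have he : Fˣ ≃ {p : Fˣ × Fˣ // p.1 = p.2} :=
      { toFun := fun x => ⟨(x, x), rfl⟩
        invFun := fun p => p.1.1
        left_inv := fun x => rfl
        right_inv := fun p => Subtype.ext (Prod.ext rfl p.2) }
    rw [← Nat.card_congr he, Nat.card_eq_fintype_card]
  have hQ : Nat.card {p : Fˣ × Fˣ // p.1 ^ s * p.2 ^ t = 1} = m :=
    (card_ker_pow s t hst).trans Nat.card_eq_fintype_card
  have hie := card_not_and_not (fun p : Fˣ × Fˣ => p.1 = p.2)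
    (fun p : Fˣ × Fˣ => p.1 ^ s * p.2 ^ t = 1)
  rw [hP, hQ, hPQ, Fintype.card_prod] at hie
  have hc2 : Nat.card W₂ + m + m = m * m + g := hie
  have hsum : Nat.card (W₁ ⊕ W₂) = g * m + Nat.card W₂ := by
    rw [Nat.card_sum, hc1]
  -- final arithmetic
  have hm2 : 2 ≤ m := by omega
  have hqm : q = m + 1 := by omega
  have harith : (q - 1) * (q - 3) + q * g ≤ g * m + Nat.card W₂ := by
    have h1 : q - 1 = m := by omega
    have h3 : q - 3 = m - 2 := by omega
    rw [h1, h3, hqm]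
    have h4 : m * (m - 2) + m * 2 = m * m := by
      rw [← Nat.mul_add, Nat.sub_add_cancel hm2]
    nlinarith [hc2]
  calc (q - 1) * (q - 3) + q * Nat.gcd (s + t) (q - 1)
      = (q - 1) * (q - 3) + q * g := by rw [hgoalgcd]
    _ ≤ g * m + Nat.card W₂ := harith
    _ = Nat.card (W₁ ⊕ W₂) := hsum.symm
    _ ≤ Zf f := hZ
end

section
/- Let q > 2 be a prime power and let s, t, t' be natural numbers with t, t' ≥ 1, gcd(s,t) = 1 and gcd(s,t') = 1. Then the toric codes C_{P^{(2,1)}(s,t)} and C_{P^{(2,1)}(s,t')} over 𝔽_q are monomially equivalent if and only if gcd(t, q−1) = gcd(t', q−1). -/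
/-- The toric code `C_{P^{(2,1)}(s,t)}`. -/
def toricCodeP21 (F : Type) [Field F] (s t : ℕ) : Set (Fˣ × Fˣ × Fˣ → F) :=
  {w | ∃ A B C D E : F, w = fP21 s t A B C D E}

namespace IsCyclic

variable {G : Type*} [CommGroup G] [IsCyclic G] [Finite G]

theorem powMonoidHom_range_eq_gcd (t : ℕ) :
    (powMonoidHom t : G →* G).range = (powMonoidHom ((Nat.card G).gcd t)).range := by
  refine Subgroup.eq_of_le_of_card_ge ?_ ?_
  · rintro _ ⟨y, rfl⟩
    refine ⟨y ^ (t / (Nat.card G).gcd t), ?_⟩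
    simp only [powMonoidHom_apply, ← pow_mul, Nat.div_mul_cancel (Nat.gcd_dvd_right _ _)]
  · rw [card_powMonoidHom_range, card_powMonoidHom_range, Nat.gcd_gcd_self_right_left]

theorem card_pow_eq_pow (t : ℕ) (a : G) :
    Nat.card {y : G // y ^ t = a ^ t} = (Nat.card G).gcd t := by
  rw [← card_powMonoidHom_ker]
  exact Nat.card_congr ((powMonoidHom t).fiberEquivKer a)

theorem exists_equiv_pow_eq_pow {t t' : ℕ} (h : (Nat.card G).gcd t = (Nat.card G).gcd t') :
    ∃ σ : G ≃ G, ∀ y, σ y ^ t = y ^ t' := by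
  have hrange : (powMonoidHom t : G →* G).range = (powMonoidHom t').range := by
    rw [powMonoidHom_range_eq_gcd t, powMonoidHom_range_eq_gcd t', h]
  have hfiber (c : G) : Nonempty ({y // y ^ t' = c} ≃ {y // y ^ t = c}) := by
    by_cases hc : c ∈ (powMonoidHom t).range
    · obtain ⟨a, rfl⟩ := hc
      obtain ⟨b, hb⟩ : a ^ t ∈ (powMonoidHom t').range := hrange ▸ ⟨a, rfl⟩
      rw [← Finite.card_eq, powMonoidHom_apply, card_pow_eq_pow, ← hb, powMonoidHom_apply,
        card_pow_eq_pow, h]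
    · have hc' : c ∉ (powMonoidHom t').range := hrange ▸ hc
      have : IsEmpty {y // y ^ t' = c} := ⟨fun y => hc' ⟨y, y.2⟩⟩
      have : IsEmpty {y // y ^ t = c} := ⟨fun y => hc ⟨y, y.2⟩⟩
      exact ⟨Equiv.equivOfIsEmpty _ _⟩
  exact ⟨Equiv.ofFiberEquiv fun c => (hfiber c).some, Equiv.ofFiberEquiv_map _⟩

end IsCyclic

section SameZeros

variable {ι R : Type*}

def SameZeros [Zero R] (C : Set (ι → R)) (v w : ι) : Prop :=
  ∀ c ∈ C, c v = 0 ↔ c w = 0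

theorem sameZeros_monomialImage_iff [MonoidWithZero R] (C : Set (ι → R)) (π : Equiv.Perm ι)
    (lam : ι → Rˣ) (v w : ι) :
    SameZeros {c' | ∃ c ∈ C, c' = fun v => (lam v : R) * c (π v)} v w ↔
      SameZeros C (π v) (π w) := by
  constructor
  · intro h c hc
    simpa only [Units.mul_right_eq_zero] using h _ ⟨c, hc, rfl⟩
  · rintro h _ ⟨c, hc, rfl⟩
    simpa only [Units.mul_right_eq_zero] using h c hc

theorem MonomiallyEquiv.exists_card_sameZeros_eq {F : Type} [Field F]
    {C₁ C₂ : Set (Fˣ × Fˣ × Fˣ → F)} (h : MonomiallyEquiv C₁ C₂) (v : Fˣ × Fˣ × Fˣ) :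
    ∃ v', Nat.card {w // SameZeros C₂ v w} = Nat.card {w // SameZeros C₁ v' w} := by
  obtain ⟨π, lam, rfl⟩ := h
  exact ⟨π v, Nat.card_congr (π.subtypeEquiv fun w => sameZeros_monomialImage_iff C₁ π lam v w)⟩

end SameZeros

section ToricCode

variable {F : Type} [Field F] (s t : ℕ)

theorem sameZeros_toricCodeP21_iff (v w : Fˣ × Fˣ × Fˣ) :
    SameZeros (toricCodeP21 F s t) v w ↔ w.1 = v.1 ∧ w.2.1 ^ t = v.2.1 ^ t ∧ w.2.2 = v.2.2 := by
  obtain ⟨x, y, z⟩ := v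
  obtain ⟨x', y', z'⟩ := w
  constructor
  · intro h
    have eval_zero (A B C D E : F) (hv : fP21 s t A B C D E (x, y, z) = 0) :
        fP21 s t A B C D E (x', y', z') = 0 :=
      (h _ ⟨A, B, C, D, E, rfl⟩).1 hv
    have hx := eval_zero (-x) 1 0 0 0 (by simp [fP21])
    have hz := eval_zero (-z) 0 0 1 0 (by simp [fP21])
    have hy := eval_zero (-(x ^ s * y ^ t * z)) 0 0 0 1 (by simp [fP21])
    simp only [fP21, zero_mul, add_zero, one_mul] at hx hz hy
    obtain rfl : x = x' := Units.ext (by linear_combination -hx)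
    obtain rfl : z = z' := Units.ext (by linear_combination -hz)
    refine ⟨rfl, Units.ext ?_, rfl⟩
    have hxz : (x : F) ^ s * z ≠ 0 := by simp
    simpa using mul_left_cancel₀ hxz (by linear_combination hy)
  · rintro ⟨rfl, hy, rfl⟩ _ ⟨A, B, C, D, E, rfl⟩
    simp only [fP21, ← Units.val_pow_eq_pow_val, hy]

theorem card_sameZeros_toricCodeP21 [Finite F] (v : Fˣ × Fˣ × Fˣ) :
    Nat.card {w // SameZeros (toricCodeP21 F s t) v w} = (Nat.card Fˣ).gcd t := by
  rw [← IsCyclic.card_pow_eq_pow t v.2.1]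
  refine Nat.card_congr
    { toFun w := ⟨w.1.2.1, ((sameZeros_toricCodeP21_iff s t v w).1 w.2).2.1⟩
      invFun y := ⟨(v.1, y.1, v.2.2), (sameZeros_toricCodeP21_iff s t _ _).2 ⟨rfl, y.2, rfl⟩⟩
      left_inv w := ?_
      right_inv y := rfl }
  obtain ⟨hx, -, hz⟩ := (sameZeros_toricCodeP21_iff s t v w).1 w.2
  ext : 1
  exact Prod.ext hx.symm (Prod.ext rfl hz.symm)

theorem monomiallyEquiv_toricCodeP21_of_pow {t' : ℕ} (σ : Fˣ ≃ Fˣ) (hσ : ∀ y, σ y ^ t = y ^ t') :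
    MonomiallyEquiv (toricCodeP21 F s t) (toricCodeP21 F s t') := by
  refine ⟨(Equiv.refl _).prodCongr (σ.prodCongr (Equiv.refl _)), fun _ => 1, ?_⟩
  have hf (A B C D E : F) : (fun v => fP21 s t A B C D E
      ((Equiv.refl _).prodCongr (σ.prodCongr (Equiv.refl _)) v)) = fP21 s t' A B C D E := by
    funext v
    simp [fP21, ← Units.val_pow_eq_pow_val, hσ]
  ext w
  simp only [toricCodeP21, Set.mem_ofPred_eq, Units.val_one, one_mul]
  constructor
  · rintro ⟨A, B, C, D, E, rfl⟩
    exact ⟨_, ⟨A, B, C, D, E, rfl⟩, (hf A B C D E).symm⟩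
  · rintro ⟨_, ⟨A, B, C, D, E, rfl⟩, rfl⟩
    exact ⟨A, B, C, D, E, hf A B C D E⟩

end ToricCode

theorem stmt16_general (F : Type) [Field F] [Fintype F] (s t t' : ℕ) :
    MonomiallyEquiv (toricCodeP21 F s t) (toricCodeP21 F s t') ↔
      Nat.gcd t (Fintype.card F - 1) = Nat.gcd t' (Fintype.card F - 1) := by
  rw [← Nat.card_eq_fintype_card, ← Nat.card_units, Nat.gcd_comm t, Nat.gcd_comm t']
  constructor
  · intro h
    obtain ⟨v', hv'⟩ := h.exists_card_sameZeros_eq 1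
    rwa [card_sameZeros_toricCodeP21, card_sameZeros_toricCodeP21, eq_comm] at hv'
  · intro h
    obtain ⟨σ, hσ⟩ := IsCyclic.exists_equiv_pow_eq_pow h
    exact monomiallyEquiv_toricCodeP21_of_pow s t σ hσ

/-- `C_{P^{(2,1)}(s,t)}` and `C_{P^{(2,1)}(s,t')}` are monomially equivalent
iff `gcd(t, q−1) = gcd(t', q−1)`. -/
theorem stmt16 (F : Type) [Field F] [Fintype F] (s t t' : ℕ)
    (hq : 2 < Fintype.card F) (ht : 1 ≤ t) (ht' : 1 ≤ t')
    (hst : Nat.gcd s t = 1) (hst' : Nat.gcd s t' = 1) :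
    MonomiallyEquiv (toricCodeP21 F s t) (toricCodeP21 F s t') ↔
      Nat.gcd t (Fintype.card F - 1) = Nat.gcd t' (Fintype.card F - 1) :=
  stmt16_general F s t t'
end

section
/- Let q > 2 be a prime power and let s, t be natural numbers with t ≥ 1 and gcd(s,t) = 1. Then the toric codes C_{P^{(2,1)}(s,t)} and C_{P^{(2,2)}} over 𝔽_q are not monomially equivalent. -/
/-- The toric code `C_{P^{(2,2)}}`. -/
def toricCodeP22 (F : Type) [Field F] : Set (Fˣ × Fˣ × Fˣ → F) :=
  {w | ∃ A B C D E : F, w = fP22 A B C D E}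

open Finset


/-- coefficient injectivity for fP22, zero version -/
lemma fP22_zero {F : Type} [Field F] (u : Fˣ) (hu : u ≠ 1)
    {A B C D E : F} (h : ∀ v, fP22 A B C D E v = 0) :
    A = 0 ∧ B = 0 ∧ C = 0 ∧ D = 0 ∧ E = 0 := by
  have hu' : (u : F) ≠ 1 := by
    intro h'
    exact hu (Units.ext (by simpa using h'))
  have hd : (u : F) - 1 ≠ 0 := sub_ne_zero.mpr hu'
  have e1 := h (1, 1, 1)
  have e2 := h (u, 1, 1)
  have e3 := h (1, u, 1)
  have e4 := h (u, u, 1)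
  have e5 := h (1, 1, u)
  simp only [fP22, Units.val_one, mul_one] at e1 e2 e3 e4 e5
  have hE : E = 0 := by
    have : E * ((u : F) - 1) = 0 := by linear_combination e5 - e1
    rcases mul_eq_zero.mp this with h' | h'
    · exact h'
    · exact absurd h' hd
  have hD : D = 0 := by
    have : D * ((u : F) - 1) ^ 2 = 0 := by linear_combination e4 - e3 - e2 + e1
    rcases mul_eq_zero.mp this with h' | h'
    · exact h'
    · exact absurd (pow_eq_zero_iff (by norm_num) |>.mp h') hd
  have hB : B = 0 := by
    have : B * ((u : F) - 1) = 0 := by linear_combination e2 - e1 - (u : F) * hD + hD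
    rcases mul_eq_zero.mp this with h' | h'
    · exact h'
    · exact absurd h' hd
  have hC : C = 0 := by
    have : C * ((u : F) - 1) = 0 := by linear_combination e3 - e1 - (u : F) * hD + hD
    rcases mul_eq_zero.mp this with h' | h'
    · exact h'
    · exact absurd h' hd
  refine ⟨?_, hB, hC, hD, hE⟩
  linear_combination e1 - hB - hC - hD - hE

/-- The coefficients of a `fP22` word are determined by the word. -/
lemma fP22_inj {F : Type} [Field F] (u : Fˣ) (hu : u ≠ 1)
    {A B C D E A' B' C' D' E' : F}
    (h : fP22 A B C D E = fP22 A' B' C' D' E') :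
    A = A' ∧ B = B' ∧ C = C' ∧ D = D' ∧ E = E' := by
  have h0 : ∀ v, fP22 (A - A') (B - B') (C - C') (D - D') (E - E') v = 0 := by
    intro v
    have hv := congrFun h v
    simp only [fP22] at hv ⊢
    linear_combination hv
  obtain ⟨h1, h2, h3, h4, h5⟩ := fP22_zero u hu h0
  exact ⟨sub_eq_zero.mp h1, sub_eq_zero.mp h2, sub_eq_zero.mp h3,
    sub_eq_zero.mp h4, sub_eq_zero.mp h5⟩


lemma fP22_card_zeros_lt {F : Type} [Field F] [Fintype F] [DecidableEq F]
    (A B C D E : F) (h : ∃ v : Fˣ × Fˣ × Fˣ, fP22 A B C D E v ≠ 0) :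
    (univ.filter fun v : Fˣ × Fˣ × Fˣ => fP22 A B C D E v = 0).card
      < 2 * (Fintype.card Fˣ * Fintype.card Fˣ) := by
  classical
  set n := Fintype.card Fˣ with hn
  have hn0 : 0 < n := Fintype.card_pos
  set Z := univ.filter fun v : Fˣ × Fˣ × Fˣ => fP22 A B C D E v = 0 with hZ
  by_cases hE : E = 0
  · subst hE
    -- the set of bad x's
    set S : Finset Fˣ := univ.filter (fun x => C + D * (x : F) = 0 ∧ A + B * (x : F) = 0)
      with hSdef
    have hS : S.card ≤ 1 := by
      by_contra h'
      push_neg at h'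
      obtain ⟨x1, hx1, x2, hx2, hx12⟩ := Finset.one_lt_card.mp h'
      simp only [hSdef, mem_filter, mem_univ, true_and] at hx1 hx2
      have hx12' : (x1 : F) - (x2 : F) ≠ 0 := by
        refine sub_ne_zero.mpr fun hc => hx12 (Units.ext hc)
      have hD : D = 0 := by
        rcases mul_eq_zero.mp (show D * ((x1 : F) - (x2 : F)) = 0 by
          linear_combination hx1.1 - hx2.1) with h'' | h''
        · exact h''
        · exact absurd h'' hx12'
      have hB : B = 0 := by
        rcases mul_eq_zero.mp (show B * ((x1 : F) - (x2 : F)) = 0 by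
          linear_combination hx1.2 - hx2.2) with h'' | h''
        · exact h''
        · exact absurd h'' hx12'
      have hC : C = 0 := by linear_combination hx1.1 - (x1 : F) * hD
      have hA : A = 0 := by linear_combination hx1.2 - (x1 : F) * hB
      obtain ⟨v, hv⟩ := h
      exact hv (by simp [fP22, hA, hB, hC, hD])
    -- fiberwise count over x
    have hfib : Z.card = ∑ x : Fˣ, (Z.filter fun v => v.1 = x).card :=
      Finset.card_eq_sum_card_fiberwise (fun v _ => mem_univ v.1)
    have hbound : ∀ x : Fˣ, x ∉ S → (Z.filter fun v => v.1 = x).card ≤ n := by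
      intro x hxS
      simp only [hSdef, mem_filter, mem_univ, true_and, not_and_or] at hxS
      by_cases hCD : C + D * (x : F) = 0
      · -- then A + B x ≠ 0, fiber empty
        have hAB : A + B * (x : F) ≠ 0 := by tauto
        have : Z.filter (fun v => v.1 = x) = ∅ := by
          rw [Finset.eq_empty_iff_forall_notMem]
          rintro v hv
          simp only [hZ, mem_filter, mem_univ, true_and] at hv
          obtain ⟨hv0, hv1⟩ := hv
          apply hAB
          have : (v.2.1 : F) ≠ 0 := Units.ne_zero _
          rw [fP22] at hv0
          subst hv1
          linear_combination hv0 - (v.2.1 : F) * hCD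
        simp [this]
      · -- y determined, inject via z
        calc (Z.filter fun v => v.1 = x).card
            ≤ (univ : Finset Fˣ).card := by
              apply Finset.card_le_card_of_injOn (fun v => v.2.2) (fun _ _ => mem_univ _)
              intro v hv w hw hvw
              simp only [hZ, mem_coe, mem_filter, mem_univ, true_and] at hv hw
              obtain ⟨hv0, hv1⟩ := hv
              obtain ⟨hw0, hw1⟩ := hw
              rw [fP22] at hv0 hw0
              have hy : v.2.1 = w.2.1 := by
                apply Units.ext
                have h2 : (C + D * (x:F)) * ((v.2.1 : F) - (w.2.1 : F)) = 0 := by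
                  rw [hv1] at hv0; rw [hw1] at hw0
                  linear_combination hv0 - hw0
                rcases mul_eq_zero.mp h2 with h'' | h''
                · exact absurd h'' hCD
                · exact sub_eq_zero.mp h''
              have : v = w := by
                apply Prod.ext
                · rw [hv1, hw1]
                · exact Prod.ext hy hvw
              exact this
          _ = n := by simp [hn]
    have hboundS : ∀ x : Fˣ, (Z.filter fun v => v.1 = x).card ≤ n * n := by
      intro x
      calc (Z.filter fun v => v.1 = x).card
          ≤ (univ : Finset (Fˣ × Fˣ)).card := by
            apply Finset.card_le_card_of_injOn (fun v => v.2) (fun _ _ => mem_univ _)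
            intro v hv w hw hvw
            simp only [mem_coe, mem_filter] at hv hw
            exact Prod.ext (hv.2.trans hw.2.symm) hvw
        _ = n * n := by simp [hn, Fintype.card_prod]
    -- split on S.card
    rcases Nat.le_one_iff_eq_zero_or_eq_one.mp hS with hS0 | hS1
    · have : Z.card ≤ n * n := by
        rw [hfib]
        calc ∑ x : Fˣ, (Z.filter fun v => v.1 = x).card
            ≤ ∑ _x : Fˣ, n := by
              apply Finset.sum_le_sum
              intro x _
              apply hbound
              simp [Finset.card_eq_zero.mp hS0]
          _ = n * n := by simp [hn, mul_comm]
      have : n * n < 2 * (n * n) := by nlinarith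
      omega
    · obtain ⟨x0, hx0⟩ := Finset.card_eq_one.mp hS1
      have key : Z.card ≤ n * n + (n - 1) * n := by
        rw [hfib, ← Finset.add_sum_erase univ _ (mem_univ x0)]
        have h1 : ∑ x ∈ univ.erase x0, (Z.filter fun v => v.1 = x).card
            ≤ (n - 1) * n := by
          calc ∑ x ∈ univ.erase x0, (Z.filter fun v => v.1 = x).card
              ≤ ∑ _x ∈ univ.erase x0, n := by
                apply Finset.sum_le_sum
                intro x hx
                apply hbound
                rw [hx0]
                simp only [mem_singleton]
                exact (Finset.mem_erase.mp hx).1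
            _ = (n - 1) * n := by
                rw [Finset.sum_const, smul_eq_mul, Finset.card_erase_of_mem (mem_univ x0)]
                simp [hn]
        have h2 := hboundS x0
        omega
      have : n * n + (n - 1) * n < 2 * (n * n) := by
        have h3 : (n - 1) * n < n * n := by
          apply Nat.mul_lt_mul_of_lt_of_le (Nat.sub_lt hn0 one_pos) le_rfl hn0
        omega
      omega
  · -- E ≠ 0 : z determined by (x, y)
    have : Z.card ≤ n * n := by
      calc Z.card ≤ (univ : Finset (Fˣ × Fˣ)).card := by
            apply Finset.card_le_card_of_injOn (fun v => (v.1, v.2.1)) (fun _ _ => mem_univ _)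
            intro v hv w hw hvw
            simp only [mem_coe, hZ, mem_filter, mem_univ, true_and] at hv hw
            rw [fP22] at hv hw
            have h1 : v.1 = w.1 := (Prod.ext_iff.mp hvw).1
            have h2 : v.2.1 = w.2.1 := (Prod.ext_iff.mp hvw).2
            have hz : v.2.2 = w.2.2 := by
              apply Units.ext
              have : E * ((v.2.2 : F) - (w.2.2 : F)) = 0 := by
                rw [h1, h2] at hv
                linear_combination hv - hw
              rcases mul_eq_zero.mp this with h'' | h''
              · exact absurd h'' hE
              · exact sub_eq_zero.mp h''
            exact Prod.ext h1 (Prod.ext h2 hz)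
        _ = n * n := by simp [hn, Fintype.card_prod]
    nlinarith


section
variable {F : Type} [Field F] (s t : ℕ) (u : Fˣ)

lemma c1_zero_iff (v : Fˣ × Fˣ × Fˣ) :
    fP21 s t (-(1 + (u : F))) 1 (u : F) 0 0 v = 0 ↔ (v.1 = 1 ∨ v.1 = u) := by
  have hxi : ((v.1⁻¹ : Fˣ) : F) * (v.1 : F) = 1 := by
    rw [← Units.val_mul]
    simp
  constructor
  · intro h0
    rw [fP21] at h0
    have hfac : ((v.1 : F) - 1) * ((v.1 : F) - u) = 0 := by
      linear_combination (v.1 : F) * h0 - (u : F) * hxi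
    rcases mul_eq_zero.mp hfac with h' | h'
    · left
      exact Units.ext (by simpa using sub_eq_zero.mp h')
    · right
      exact Units.ext (sub_eq_zero.mp h')
  · intro h'
    rcases h' with h1 | h1
    · rw [fP21, h1]
      simp only [inv_one, Units.val_one, one_mul, mul_one, zero_mul, mul_zero, add_zero]
      ring
    · rw [h1] at hxi
      rw [fP21, h1]
      linear_combination hxi

end

/-- `C_{P^{(2,1)}(s,t)}` and `C_{P^{(2,2)}}` are never monomially
equivalent. -/
theorem stmt19 (F : Type) [Field F] [Fintype F] (s t : ℕ)
    (hq : 2 < Fintype.card F) (ht : 1 ≤ t) (hst : Nat.gcd s t = 1) :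
    ¬ MonomiallyEquiv (toricCodeP21 F s t) (toricCodeP22 F) := by
  classical
  rintro ⟨π, lam, hC⟩
  have hcardu : Fintype.card Fˣ = Fintype.card F - 1 := by
    have h := Fintype.card_units (α := F)
    convert h using 2
  have hn2 : 2 ≤ Fintype.card Fˣ := by omega
  rcases lt_or_ge (Fintype.card Fˣ) 3 with h3 | h3
  · -- `q = 3`: the code `C_{P^{(2,1)}}` has at most `q⁴` words since `x⁻¹ = x`,
    -- while `C_{P^{(2,2)}}` has `q⁵` words.
    have hinv : ∀ x : Fˣ, x⁻¹ = x := by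
      intro x
      have hn : Fintype.card Fˣ = 2 := by omega
      have hx : x ^ Fintype.card Fˣ = 1 := pow_card_eq_one
      rw [hn, pow_two] at hx
      exact inv_eq_of_mul_eq_one_right hx
    have hcF3 : Fintype.card F = 3 := by omega
    obtain ⟨u, hu⟩ : ∃ u : Fˣ, u ≠ 1 := Fintype.exists_ne_of_one_lt_card (by omega) 1
    have key : ∀ p : F × F × F × F × F, ∃ r : F × F × F × F,
        fP22 p.1 p.2.1 p.2.2.1 p.2.2.2.1 p.2.2.2.2
          = fun v => (lam v : F) * fP21 s t r.1 r.2.1 0 r.2.2.1 r.2.2.2 (π v) := by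
      intro p
      have hmem : fP22 p.1 p.2.1 p.2.2.1 p.2.2.2.1 p.2.2.2.2 ∈ toricCodeP22 F :=
        ⟨p.1, p.2.1, p.2.2.1, p.2.2.2.1, p.2.2.2.2, rfl⟩
      rw [hC] at hmem
      obtain ⟨c, hcmem, heq⟩ := hmem
      obtain ⟨A', B', C', D', E', rfl⟩ := hcmem
      refine ⟨(A', B' + C', D', E'), ?_⟩
      rw [heq]
      funext v
      have h21 : fP21 s t A' B' C' D' E' (π v) = fP21 s t A' (B' + C') 0 D' E' (π v) := by
        simp only [fP21, hinv]
        ring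
      rw [h21]
    choose g hg using key
    have hginj : Function.Injective g := by
      intro p p' hpp
      have heq2 : fP22 p.1 p.2.1 p.2.2.1 p.2.2.2.1 p.2.2.2.2
          = fP22 p'.1 p'.2.1 p'.2.2.1 p'.2.2.2.1 p'.2.2.2.2 := by
        rw [hg p, hg p', hpp]
      obtain ⟨h1, h2, h3', h4, h5⟩ := fP22_inj u hu heq2
      exact Prod.ext h1 (Prod.ext h2 (Prod.ext h3' (Prod.ext h4 h5)))
    have hle := Fintype.card_le_of_injective g hginj
    simp only [Fintype.card_prod] at hle
    rw [hcF3] at hle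
    norm_num at hle
  · -- main case: `C_{P^{(2,1)}}` contains the word `x⁻¹(x-1)(x-u)` with
    -- `2(q-1)²` zeros, but every nonzero word of `C_{P^{(2,2)}}` has fewer zeros.
    obtain ⟨u, hu⟩ : ∃ u : Fˣ, u ≠ 1 := Fintype.exists_ne_of_one_lt_card (by omega) 1
    obtain ⟨x0, hx01, hx0u⟩ : ∃ x0 : Fˣ, x0 ≠ 1 ∧ x0 ≠ u := by
      by_contra hcon
      push_neg at hcon
      have hsub : (univ : Finset Fˣ) ⊆ {1, u} := by
        intro x _
        rcases Classical.em (x = 1) with h | h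
        · simp [h]
        · simp [hcon x h]
      have hc := Finset.card_le_card hsub
      have h2 : ({1, u} : Finset Fˣ).card ≤ 2 := by
        refine (Finset.card_insert_le _ _).trans ?_
        simp
      rw [Finset.card_univ] at hc
      omega
    have hc1mem : fP21 s t (-(1 + (u : F))) 1 (u : F) 0 0 ∈ toricCodeP21 F s t :=
      ⟨_, _, _, _, _, rfl⟩
    have hw : (fun v => (lam v : F) * fP21 s t (-(1 + (u : F))) 1 (u : F) 0 0 (π v))
        ∈ toricCodeP22 F := by
      rw [hC]
      exact ⟨_, hc1mem, rfl⟩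
    obtain ⟨A, B, C, D, E, hwEq⟩ := hw
    have hvals : ∀ v, fP22 A B C D E v
        = (lam v : F) * fP21 s t (-(1 + (u : F))) 1 (u : F) 0 0 (π v) :=
      fun v => (congrFun hwEq v).symm
    have hne : ∃ v, fP22 A B C D E v ≠ 0 := by
      refine ⟨π.symm (x0, 1, 1), ?_⟩
      rw [hvals (π.symm (x0, 1, 1)), Equiv.apply_symm_apply]
      apply mul_ne_zero (Units.ne_zero _)
      intro h0
      rcases (c1_zero_iff s t u _).mp h0 with h1 | h1
      · exact hx01 h1
      · exact hx0u h1
    have hlt := fP22_card_zeros_lt A B C D E hne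
    have hZeq : (univ.filter fun v : Fˣ × Fˣ × Fˣ => fP22 A B C D E v = 0)
        = univ.filter fun v => (π v).1 = 1 ∨ (π v).1 = u := by
      ext v
      simp only [mem_filter, mem_univ, true_and]
      rw [hvals v, mul_eq_zero]
      constructor
      · rintro (h' | h')
        · exact absurd h' (Units.ne_zero _)
        · exact (c1_zero_iff s t u _).mp h'
      · intro h'
        exact Or.inr ((c1_zero_iff s t u _).mpr h')
    have hperm : (univ.filter fun v : Fˣ × Fˣ × Fˣ => (π v).1 = 1 ∨ (π v).1 = u).card
        = (univ.filter fun v : Fˣ × Fˣ × Fˣ => v.1 = 1 ∨ v.1 = u).card := by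
      apply Finset.card_equiv π
      intro i
      simp
    have hprod : (univ.filter fun v : Fˣ × Fˣ × Fˣ => v.1 = 1 ∨ v.1 = u)
        = ({1, u} : Finset Fˣ) ×ˢ (univ : Finset (Fˣ × Fˣ)) := by
      ext v
      simp [Finset.mem_product]
    have hcard2 : ({1, u} : Finset Fˣ).card = 2 := by
      rw [Finset.card_insert_of_notMem (by simpa using hu.symm)]
      simp
    rw [hZeq, hperm, hprod, Finset.card_product, hcard2, Finset.card_univ,
      Fintype.card_prod] at hlt
    exact lt_irrefl _ hlt
end
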